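/- arXiv:1904.07825 — 12 statements merged into one kernel-verified Lean document; each statement's English description precedes it below -/
import Mathlib

section
/- Let G be a finite simple graph and let F be the family of all maximum independent (stable) sets of G. Then |⋂_{S∈F} S| + |⋃_{S∈F} S| ≥ 2·α(G), where α(G) is the independence number of G. -/
/-!
Induct on a nonempty family `𝒢` of maximum independent sets, with `I = ⋂ 𝒢` and `U = ⋃ 𝒢`.
When a maximum independent set `S` is added, `I ∪ (S ∩ U)` is still independent: any two of
its vertices lie together in `S` or in a member of `𝒢`. Maximality of `S` then bounds its size
by `|S|`, which by inclusion–exclusion says `|I| + |U| ≤ |S ∩ I| + |S ∪ U|`, so the quantity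
`|⋂| + |⋃|` can only grow; for a single set it equals `2α`.
-/

open Finset

theorem Finset.card_add_card_le_card_inter_add_card_union {α : Type*} [DecidableEq α]
    {S I U : Finset α} (h : #(I ∪ (S ∩ U)) ≤ #S) : #I + #U ≤ #(S ∩ I) + #(S ∪ U) := by
  have hIS : #(I ∩ (S ∩ U)) ≤ #(S ∩ I) := by
    rw [inter_comm S I]
    exact card_le_card (inter_subset_inter_left inter_subset_left)
  have := card_union_add_card_inter I (S ∩ U)
  have := card_union_add_card_inter S U
  omega

namespace SimpleGraph

variable {V : Type*} {G : SimpleGraph V}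

section DecidableEq

variable [DecidableEq V]

theorem isIndepSet_inf'_union_inter_sup' {𝒢 : Finset (Finset V)} (h𝒢 : 𝒢.Nonempty)
    (hind : ∀ T ∈ 𝒢, G.IsIndepSet (T : Set V)) {S : Finset V} (hS : G.IsIndepSet (S : Set V)) :
    G.IsIndepSet (↑(𝒢.inf' h𝒢 id ∪ (S ∩ 𝒢.sup' h𝒢 id)) : Set V) := by
  have hI : ∀ T ∈ 𝒢, 𝒢.inf' h𝒢 id ⊆ T := fun T hT => inf'_le id hT
  have hIU : ∀ x ∈ 𝒢.inf' h𝒢 id, ∀ y ∈ 𝒢.sup' h𝒢 id, x ≠ y → ¬ G.Adj x y := by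
    intro x hx y hy hxy
    obtain ⟨T, hT, hyT⟩ := (mem_sup' h𝒢).1 hy
    exact hind T hT (hI T hT hx) hyT hxy
  obtain ⟨T₀, hT₀⟩ := h𝒢
  intro x hx y hy hxy
  simp only [coe_union, coe_inter, Set.mem_union, Set.mem_inter_iff, mem_coe] at hx hy
  rcases hx with hxI | ⟨hxS, hxU⟩ <;> rcases hy with hyI | ⟨hyS, hyU⟩
  · exact hind T₀ hT₀ (hI T₀ hT₀ hxI) (hI T₀ hT₀ hyI) hxy
  · exact hIU x hxI y hyU hxy
  · exact fun hadj => hIU y hyI x hxU hxy.symm hadj.symm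
  · exact hS hxS hyS hxy

theorem two_mul_indepNum_le_card_inf'_add_card_sup' [Finite V] {𝒢 : Finset (Finset V)}
    (h𝒢 : 𝒢.Nonempty) (hmax : ∀ T ∈ 𝒢, G.IsMaximumIndepSet T) :
    2 * G.indepNum ≤ #(𝒢.inf' h𝒢 id) + #(𝒢.sup' h𝒢 id) := by
  induction h𝒢 using Nonempty.cons_induction with
  | singleton S =>
    rw [inf'_singleton, sup'_singleton, id,
      maximumIndepSet_card_eq_indepNum S (hmax S (mem_singleton_self S))]
    omega
  | cons S 𝒢 hS h𝒢 ih =>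
    have hmax𝒢 : ∀ T ∈ 𝒢, G.IsMaximumIndepSet T := fun T hT => hmax T (mem_cons_of_mem hT)
    have hmaxS : G.IsMaximumIndepSet S := hmax S (mem_cons_self S 𝒢)
    have hind := isIndepSet_inf'_union_inter_sup' h𝒢
      (fun T hT => (hmax𝒢 T hT).isIndepSet) hmaxS.isIndepSet
    rw [inf'_cons h𝒢, sup'_cons h𝒢]
    exact (ih hmax𝒢).trans
      (card_add_card_le_card_inter_add_card_union (hmaxS.maximum _ hind))

end DecidableEq

theorem two_mul_indepNum_le_ncard_biInter_add_ncard_biUnion [Finite V] {𝒢 : Set (Finset V)}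
    (h𝒢 : 𝒢.Nonempty) (hmax : ∀ T ∈ 𝒢, G.IsMaximumIndepSet T) :
    2 * G.indepNum ≤ (⋂ S ∈ 𝒢, (S : Set V)).ncard + (⋃ S ∈ 𝒢, (S : Set V)).ncard := by
  classical
  obtain ⟨𝒢, rfl⟩ := 𝒢.toFinite.exists_finset_coe
  have h𝒢' : 𝒢.Nonempty := coe_nonempty.1 h𝒢
  have hinter : (⋂ S ∈ (𝒢 : Set (Finset V)), (S : Set V)) = ↑(𝒢.inf' h𝒢' id) := by
    ext; simp [mem_inf']
  have hunion : (⋃ S ∈ (𝒢 : Set (Finset V)), (S : Set V)) = ↑(𝒢.sup' h𝒢' id) := by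
    ext; simp [mem_sup']
  rw [hinter, hunion, Set.ncard_coe_finset, Set.ncard_coe_finset]
  exact two_mul_indepNum_le_card_inf'_add_card_sup' h𝒢' hmax

end SimpleGraph

/-- For a finite simple graph `G` with independence number `α`,
the family `F` of all maximum independent sets satisfies
`|⋂ S ∈ F, S| + |⋃ S ∈ F, S| ≥ 2 α`. -/
theorem stmt_0 {V : Type*} [Fintype V] (G : SimpleGraph V) (α : ℕ)
    (hα : IsGreatest {n : ℕ | ∃ S : Finset V,
        (∀ v ∈ S, ∀ w ∈ S, v ≠ w → ¬ G.Adj v w) ∧ S.card = n} α) :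
    2 * α ≤
      (⋂ S ∈ {S : Finset V | (∀ v ∈ S, ∀ w ∈ S, v ≠ w → ¬ G.Adj v w) ∧ S.card = α},
          (S : Set V)).ncard +
      (⋃ S ∈ {S : Finset V | (∀ v ∈ S, ∀ w ∈ S, v ≠ w → ¬ G.Adj v w) ∧ S.card = α},
          (S : Set V)).ncard := by
  obtain ⟨⟨S₀, hS₀, hα⟩, hub⟩ := hα
  have hmax : ∀ S : Finset V, G.IsIndepSet (S : Set V) → S.card = α → G.IsMaximumIndepSet S :=
    fun S hS hcard => ⟨hS, fun T hT => hcard ▸ hub ⟨T, hT, rfl⟩⟩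
  have hα_eq : α = G.indepNum := hα ▸ G.maximumIndepSet_card_eq_indepNum S₀ (hmax S₀ hS₀ hα)
  subst hα_eq
  refine G.two_mul_indepNum_le_ncard_biInter_add_ncard_biUnion ⟨S₀, hS₀, hα⟩ ?_
  rintro S ⟨hS, hcard⟩
  exact hmax S hS hcard
end

section
/- Let G be a finite simple graph with independence number α(G) > |V(G)|/2, and let F be the family of all maximum independent sets of G. Then |⋂_{S∈F} S| ≥ δ(G) + 2α(G) − |V(G)| ≥ δ(G) + 1, where δ(G) is the minimum degree of G. -/
open Finset

/-- Replacement counting lemma: if `X` is an independent set disjoint from a maximum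
independent set `S`, then `X` has at most as many elements as it has neighbours in `S`. -/
private lemma aux_repl {V : Type*} [Fintype V] [DecidableEq V] (G : SimpleGraph V)
    [DecidableRel G.Adj] (α : ℕ)
    (hub : ∀ I : Finset V, (∀ v ∈ I, ∀ w ∈ I, v ≠ w → ¬ G.Adj v w) → I.card ≤ α)
    (X S : Finset V)
    (hX : ∀ v ∈ X, ∀ w ∈ X, v ≠ w → ¬ G.Adj v w)
    (hS : ∀ v ∈ S, ∀ w ∈ S, v ≠ w → ¬ G.Adj v w) (hSα : S.card = α)
    (hdisj : Disjoint X S) :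
    X.card ≤ (X.biUnion fun v => S.filter (G.Adj v)).card := by
  set Y : Finset V := X.biUnion fun v => S.filter (G.Adj v) with hY
  have hYS : Y ⊆ S := by
    refine Finset.biUnion_subset.2 fun v _ => Finset.filter_subset _ _
  -- the replacement set
  set S' : Finset V := (S \ Y) ∪ X with hS'
  have hS'indep : ∀ v ∈ S', ∀ w ∈ S', v ≠ w → ¬ G.Adj v w := by
    intro v hv w hw hne hadj
    rcases Finset.mem_union.1 hv with hv' | hv' <;>
      rcases Finset.mem_union.1 hw with hw' | hw'
    · exact hS v (Finset.mem_sdiff.1 hv').1 w (Finset.mem_sdiff.1 hw').1 hne hadj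
    · -- v ∈ S \ Y, w ∈ X : then v ∈ Y, contradiction
      have : v ∈ Y := Finset.mem_biUnion.2 ⟨w, hw',
        Finset.mem_filter.2 ⟨(Finset.mem_sdiff.1 hv').1, hadj.symm⟩⟩
      exact (Finset.mem_sdiff.1 hv').2 this
    · have : w ∈ Y := Finset.mem_biUnion.2 ⟨v, hv',
        Finset.mem_filter.2 ⟨(Finset.mem_sdiff.1 hw').1, hadj⟩⟩
      exact (Finset.mem_sdiff.1 hw').2 this
    · exact hX v hv' w hw' hne hadj
  have hcardle : S'.card ≤ α := hub S' hS'indep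
  have hd2 : Disjoint (S \ Y) X := hdisj.symm.mono_left Finset.sdiff_subset
  have hcard : S'.card = (S \ Y).card + X.card := Finset.card_union_of_disjoint hd2
  have h1 : (S \ Y).card = S.card - Y.card := Finset.card_sdiff_of_subset hYS
  have h2 : Y.card ≤ S.card := Finset.card_le_card hYS
  omega

/-- For any nonempty family of maximum independent sets,
`2α ≤ |⋂ family| + |⋃ family|`. -/
private lemma aux_core {V : Type*} [Fintype V] [DecidableEq V] (G : SimpleGraph V)
    [DecidableRel G.Adj] (α : ℕ)
    (hub : ∀ I : Finset V, (∀ v ∈ I, ∀ w ∈ I, v ≠ w → ¬ G.Adj v w) → I.card ≤ α)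
    (𝒢 : Finset (Finset V)) (h𝒢 : 𝒢.Nonempty)
    (hmem : ∀ S ∈ 𝒢, (∀ v ∈ S, ∀ w ∈ S, v ≠ w → ¬ G.Adj v w) ∧ S.card = α) :
    2 * α ≤ (𝒢.inf id).card + (𝒢.sup id).card := by
  induction 𝒢 using Finset.cons_induction with
  | empty => exact absurd h𝒢 (by simp)
  | cons S 𝒢 hS ih =>
    rcases Finset.eq_empty_or_nonempty 𝒢 with rfl | hne
    · have hSα : S.card = α := (hmem S (Finset.mem_cons_self _ _)).2
      simp only [Finset.inf_cons, Finset.sup_cons, Finset.inf_empty, Finset.sup_empty,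
        id_eq, inf_top_eq, sup_bot_eq]
      omega
    · have hmem' : ∀ S' ∈ 𝒢, (∀ v ∈ S', ∀ w ∈ S', v ≠ w → ¬ G.Adj v w) ∧ S'.card = α :=
        fun S' hS' => hmem S' (Finset.mem_cons_of_mem hS')
      have ihc := ih hne hmem'
      set T : Finset V := 𝒢.inf id with hT
      set U : Finset V := 𝒢.sup id with hU
      have hSα : S.card = α := (hmem S (Finset.mem_cons_self _ _)).2
      have hSindep := (hmem S (Finset.mem_cons_self _ _)).1
      -- T is contained in every member of 𝒢
      have hTsub : ∀ S' ∈ 𝒢, T ⊆ S' := fun S' hS' => Finset.le_iff_subset.mp (Finset.inf_le hS')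
      obtain ⟨S1, hS1⟩ := hne
      have hTindep : ∀ v ∈ T, ∀ w ∈ T, v ≠ w → ¬ G.Adj v w := by
        intro v hv w hw hne' hadj
        exact (hmem' S1 hS1).1 v (hTsub S1 hS1 hv) w (hTsub S1 hS1 hw) hne' hadj
      -- key inequality: |T \ S| ≤ |S \ U|
      set X : Finset V := T \ S with hX
      have hXindep : ∀ v ∈ X, ∀ w ∈ X, v ≠ w → ¬ G.Adj v w := by
        intro v hv w hw hne' hadj
        exact hTindep v (Finset.mem_sdiff.1 hv).1 w (Finset.mem_sdiff.1 hw).1 hne' hadj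
      have hXdisj : Disjoint X S := Finset.sdiff_disjoint
      have hrepl := aux_repl G α hub X S hXindep hSindep hSα hXdisj
      have hYsub : (X.biUnion fun v => S.filter (G.Adj v)) ⊆ S \ U := by
        intro y hy
        obtain ⟨v, hv, hy'⟩ := Finset.mem_biUnion.1 hy
        have hyS : y ∈ S := (Finset.mem_filter.1 hy').1
        have hadj : G.Adj v y := (Finset.mem_filter.1 hy').2
        refine Finset.mem_sdiff.2 ⟨hyS, fun hyU => ?_⟩
        obtain ⟨S', hS', hyS'⟩ := Finset.mem_sup.1 hyU
        have hvS' : v ∈ S' := hTsub S' hS' (Finset.mem_sdiff.1 hv).1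
        exact (hmem' S' hS').1 v hvS' y hyS' hadj.ne hadj
      have hkey : X.card ≤ (S \ U).card :=
        le_trans hrepl (Finset.card_le_card hYsub)
      -- assemble
      have e1 : (S ∩ T).card + (S ∪ T).card = S.card + T.card :=
        Finset.card_inter_add_card_union S T
      have e2 : (S \ U).card + U.card = (S ∪ U).card := Finset.card_sdiff_add_card S U
      have e3 : (T \ S).card + S.card = (T ∪ S).card := Finset.card_sdiff_add_card T S
      have e4 : (T ∪ S) = (S ∪ T) := Finset.union_comm T S
      rw [e4, ← hX] at e3
      have hgoal : ((Finset.cons S 𝒢 hS).inf id).card = (S ∩ T).card ∧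
          ((Finset.cons S 𝒢 hS).sup id).card = (S ∪ U).card := by
        constructor
        · rw [Finset.inf_cons]; rfl
        · rw [Finset.sup_cons]; rfl
      rw [hgoal.1, hgoal.2]
      omega

/-- If `α(G) > |V(G)|/2`, then the intersection of all maximum
independent sets of `G` has size at least `δ(G) + 2α(G) − |V(G)| ≥ δ(G) + 1`. -/
theorem stmt_1 {V : Type*} [Fintype V] [Nonempty V] (G : SimpleGraph V)
    [DecidableRel G.Adj] (α : ℕ)
    (hα : IsGreatest {n : ℕ | ∃ S : Finset V,
        (∀ v ∈ S, ∀ w ∈ S, v ≠ w → ¬ G.Adj v w) ∧ S.card = n} α)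
    (hbig : Fintype.card V < 2 * α) :
    ((G.minDegree : ℤ) + 2 * α - Fintype.card V ≤
      ((⋂ S ∈ {S : Finset V | (∀ v ∈ S, ∀ w ∈ S, v ≠ w → ¬ G.Adj v w) ∧ S.card = α},
          (S : Set V)).ncard : ℤ)) ∧
    ((G.minDegree : ℤ) + 1 ≤ (G.minDegree : ℤ) + 2 * α - Fintype.card V) := by
  classical
  obtain ⟨⟨S0, hS0i, hS0c⟩, hub'⟩ := hα
  have hub : ∀ I : Finset V, (∀ v ∈ I, ∀ w ∈ I, v ≠ w → ¬ G.Adj v w) → I.card ≤ α :=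
    fun I hI => hub' ⟨I, hI, rfl⟩
  set 𝔽 : Finset (Finset V) := Finset.univ.filter
      (fun S => (∀ v ∈ S, ∀ w ∈ S, v ≠ w → ¬ G.Adj v w) ∧ S.card = α) with h𝔽
  have hmem𝔽 : ∀ S : Finset V, S ∈ 𝔽 ↔
      ((∀ v ∈ S, ∀ w ∈ S, v ≠ w → ¬ G.Adj v w) ∧ S.card = α) := by
    intro S; simp [h𝔽]
  have h𝔽ne : 𝔽.Nonempty := ⟨S0, (hmem𝔽 S0).2 ⟨hS0i, hS0c⟩⟩
  have key := aux_core G α hub 𝔽 h𝔽ne (fun S hS => (hmem𝔽 S).1 hS)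
  set T : Finset V := 𝔽.inf id with hT
  set U : Finset V := 𝔽.sup id with hU
  have hUcard : U.card ≤ Fintype.card V := Finset.card_le_univ U
  have hTne : T.Nonempty := by
    rw [← Finset.card_pos]
    omega
  obtain ⟨u, hu⟩ := hTne
  have hdeg : G.minDegree ≤ G.degree u := G.minDegree_le_degree u
  have hdisj : Disjoint (G.neighborFinset u) U := by
    rw [Finset.disjoint_left]
    intro w hw hwU
    obtain ⟨S, hS𝔽, hwS⟩ := Finset.mem_sup.1 hwU
    have huS : u ∈ S := Finset.le_iff_subset.mp (Finset.inf_le hS𝔽) hu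
    have hadj : G.Adj u w := (SimpleGraph.mem_neighborFinset G u w).1 hw
    exact ((hmem𝔽 S).1 hS𝔽).1 u huS w hwS hadj.ne hadj
  have hdegU : G.degree u + U.card ≤ Fintype.card V := by
    have : (G.neighborFinset u ∪ U).card = G.degree u + U.card := by
      rw [Finset.card_union_of_disjoint hdisj, G.card_neighborFinset_eq_degree]
    calc G.degree u + U.card = (G.neighborFinset u ∪ U).card := this.symm
      _ ≤ Fintype.card V := Finset.card_le_univ _
  -- identify the intersection in the statement with T
  have hset : (⋂ S ∈ {S : Finset V | (∀ v ∈ S, ∀ w ∈ S, v ≠ w → ¬ G.Adj v w) ∧ S.card = α},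
      (S : Set V)) = (T : Set V) := by
    ext x
    simp only [Set.mem_iInter, Set.mem_setOf_eq, Finset.coe_mem, Finset.mem_coe]
    constructor
    · intro hx
      have : ({x} : Finset V) ≤ T := by
        refine Finset.le_inf fun S hS => ?_
        have := hx S ((hmem𝔽 S).1 hS)
        simpa [Finset.singleton_subset_iff] using this
      exact this (Finset.mem_singleton_self x)
    · intro hx S hSmem
      exact Finset.le_iff_subset.mp (Finset.inf_le ((hmem𝔽 S).2 hSmem)) hx
  rw [hset, Set.ncard_coe_finset]
  constructor
  · have h1 : 2 * α ≤ T.card + U.card := key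
    have h2 : G.minDegree ≤ G.degree u := hdeg
    omega
  · omega
end

section
/- Let G be a finite simple graph with α(G) > |V(G)|/2 and let F be the family of all maximum independent sets of G. If ⋂_{S∈F} S = {u} is a single vertex, then α(G) = (|V(G)|+1)/2 and u is an isolated vertex of G. -/
/-!
Let `I` and `U` be the intersection and the union of a family of maximum independent sets.
Every `x ∈ I` and `y ∈ U` lie in a common independent set, so `I` has no neighbours in `U`.
Hence for any further maximum independent set `S`, the set `I ∪ (U ∩ S)` is independent,
and inclusion–exclusion turns `#(I ∪ (U ∩ S)) ≤ α(G)` into `#I + #U ≤ #(S ∩ I) + #(S ∪ U)`;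
by induction on the family, `2 α(G) ≤ #I + #U`. For the family of all maximum independent sets
with `I = {u}` this gives `2 α(G) ≤ |V| + 1`, so `α(G) > |V| / 2` forces `U = V`, and then `u`
has no neighbours at all.
-/

open Finset

namespace SimpleGraph

variable {V : Type*} {G : SimpleGraph V}

lemma isIndepSet_union_of_forall_not_adj {A B : Set V} (hA : G.IsIndepSet A)
    (hB : G.IsIndepSet B) (hAB : ∀ x ∈ A, ∀ y ∈ B, ¬ G.Adj x y) : G.IsIndepSet (A ∪ B) :=
  have : Std.Symm fun v w ↦ ¬ G.Adj v w := ⟨fun _ _ h h' ↦ h h'.symm⟩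
  Set.pairwise_union_of_symm.mpr ⟨hA, hB, fun x hx y hy _ ↦ hAB x hx y hy⟩

variable [Fintype V] [DecidableEq V]

lemma not_adj_of_mem_inf_of_mem_sup {𝓕 : Finset (Finset V)}
    (h𝓕 : ∀ S ∈ 𝓕, G.IsIndepSet (S : Set V)) {x y : V}
    (hx : x ∈ 𝓕.inf id) (hy : y ∈ 𝓕.sup id) : ¬ G.Adj x y := by
  obtain ⟨T, hT, hyT⟩ := mem_sup.mp hy
  intro hxy
  exact h𝓕 T hT (mem_inf.mp hx T hT) hyT hxy.ne hxy

lemma two_mul_le_card_inf_add_card_sup {α : ℕ}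
    (hmax : ∀ S : Finset V, G.IsIndepSet (S : Set V) → #S ≤ α)
    {𝓕 : Finset (Finset V)} (hne : 𝓕.Nonempty)
    (h𝓕 : ∀ S ∈ 𝓕, G.IsIndepSet (S : Set V) ∧ #S = α) :
    2 * α ≤ #(𝓕.inf id) + #(𝓕.sup id) := by
  induction hne using Nonempty.cons_induction with
  | singleton S =>
    have hS := (h𝓕 S (mem_singleton_self S)).2
    simp only [inf_singleton, sup_singleton, id, hS]
    omega
  | cons S 𝓕 hS𝓕 hne ih =>
    obtain ⟨hSind, hScard⟩ := h𝓕 S (mem_cons_self S 𝓕)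
    have h𝓕' : ∀ T ∈ 𝓕, G.IsIndepSet (T : Set V) ∧ #T = α :=
      fun T hT ↦ h𝓕 T (mem_cons_of_mem hT)
    specialize ih h𝓕'
    rw [inf_cons, sup_cons]
    set I := 𝓕.inf id
    set U := 𝓕.sup id
    obtain ⟨T, hT⟩ := hne
    have hIU : I ⊆ U := (inf_le hT).trans (le_sup (f := id) hT)
    have hIU_adj : ∀ x ∈ I, ∀ y ∈ U, ¬ G.Adj x y :=
      fun x hx y hy ↦ not_adj_of_mem_inf_of_mem_sup (fun T hT ↦ (h𝓕' T hT).1) hx hy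
    have hW : G.IsIndepSet ((I ∪ U ∩ S : Finset V) : Set V) := by
      rw [coe_union]
      refine isIndepSet_union_of_forall_not_adj ?_ ?_ ?_
      · exact fun x hx y hy _ ↦ hIU_adj x hx y (hIU hy)
      · exact hSind.mono (by simp)
      · exact fun x hx y hy ↦ hIU_adj x hx y (mem_of_mem_inter_left hy)
    have hIUS : I ∩ (U ∩ S) = S ∩ I := by
      rw [← inter_assoc, inter_eq_left.mpr hIU, inter_comm]
    have h₁ := card_union_add_card_inter I (U ∩ S)
    have h₂ := card_union_add_card_inter U S
    rw [hIUS] at h₁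
    rw [id, inf_eq_inter, sup_eq_union, union_comm S U]
    have := hmax _ hW
    omega

end SimpleGraph

open SimpleGraph

/-- If `α(G) > |V(G)|/2` and the intersection of all maximum
independent sets of `G` is a single vertex `u`, then `α(G) = (|V(G)|+1)/2`
and `u` is isolated. -/
theorem stmt_2 {V : Type*} [Fintype V] (G : SimpleGraph V) (α : ℕ)
    (hα : IsGreatest {n : ℕ | ∃ S : Finset V,
        (∀ v ∈ S, ∀ w ∈ S, v ≠ w → ¬ G.Adj v w) ∧ S.card = n} α)
    (hbig : Fintype.card V < 2 * α) (u : V)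
    (hu : (⋂ S ∈ {S : Finset V | (∀ v ∈ S, ∀ w ∈ S, v ≠ w → ¬ G.Adj v w) ∧ S.card = α},
        (S : Set V)) = {u}) :
    2 * α = Fintype.card V + 1 ∧ ∀ v : V, ¬ G.Adj u v := by
  classical
  obtain ⟨⟨S₀, hS₀⟩, hmax⟩ := hα
  let 𝓕 := univ.filter fun S : Finset V ↦ G.IsIndepSet (S : Set V) ∧ #S = α
  have hinf : 𝓕.inf id = {u} := by
    ext x
    rw [mem_inf, mem_singleton, ← Set.mem_singleton_iff, ← hu, Set.mem_iInter₂]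
    simp [𝓕, Set.Pairwise]
  have hcard : 2 * α ≤ #(𝓕.inf id) + #(𝓕.sup id) := two_mul_le_card_inf_add_card_sup
    (fun S hS ↦ hmax ⟨S, fun v hv w hw ↦ hS hv hw, rfl⟩)
    ⟨S₀, mem_filter.mpr ⟨mem_univ _, hS₀⟩⟩ (fun S hS ↦ (mem_filter.mp hS).2)
  rw [hinf, card_singleton] at hcard
  have hsup_le := card_le_univ (𝓕.sup id)
  have hsup : 𝓕.sup id = univ := eq_univ_of_card _ (by omega)
  exact ⟨by omega, fun v ↦ not_adj_of_mem_inf_of_mem_sup (fun S hS ↦ (mem_filter.mp hS).2.1)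
    (hinf ▸ mem_singleton_self u) (hsup ▸ mem_univ v)⟩
end

section
/- Let G be a finite simple graph, let X be a maximum independent set of G with |X| > |V(G)|/2, and let Y = V(G)\X. Consider the bipartite subgraph H = G[X,Y]. If T is a maximum independent set of H, then for every subset S ⊆ Y\T, the neighborhood of S inside X∖(X∖T) within H has size at least |S| (i.e., Hall's condition holds), and hence G[X∖(X∖T), Y∖T] contains a matching saturating Y∖T. -/
open Classical

/-- With `X` a maximum independent set of `G`, `|X| > |V|/2`,
`Y = V ∖ X`, `H = G[X,Y]` the bipartite subgraph, and `T` a maximum independent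
set of `H`, Hall's condition holds for the bipartite graph between `X ∩ T` and
`Y ∖ T`, and hence there is a matching saturating `Y ∖ T`. -/
theorem stmt_3 {V : Type*} [Fintype V] [DecidableEq V] (G : SimpleGraph V)
    (X : Finset V)
    (hXind : ∀ v ∈ X, ∀ w ∈ X, v ≠ w → ¬ G.Adj v w)
    (hXmax : ∀ S : Finset V, (∀ v ∈ S, ∀ w ∈ S, v ≠ w → ¬ G.Adj v w) → S.card ≤ X.card)
    (hXbig : Fintype.card V < 2 * X.card)
    (Y : Finset V) (hY : Y = Xᶜ)
    (H : SimpleGraph V)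
    (hH : ∀ a b : V, H.Adj a b ↔ G.Adj a b ∧ ((a ∈ X ∧ b ∈ Y) ∨ (a ∈ Y ∧ b ∈ X)))
    (T : Finset V)
    (hTind : ∀ v ∈ T, ∀ w ∈ T, v ≠ w → ¬ H.Adj v w)
    (hTmax : ∀ S : Finset V, (∀ v ∈ S, ∀ w ∈ S, v ≠ w → ¬ H.Adj v w) → S.card ≤ T.card) :
    (∀ S : Finset V, S ⊆ Y \ T →
      S.card ≤ ((X ∩ T).filter (fun x => ∃ s ∈ S, G.Adj s x)).card) ∧
    ∃ f : V → V, Set.InjOn f ↑(Y \ T) ∧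
      ∀ v ∈ Y \ T, f v ∈ X ∩ T ∧ G.Adj v (f v) := by
  have hYX : ∀ v ∈ Y, v ∉ X := by
    intro v hv
    rw [hY, Finset.mem_compl] at hv
    exact hv
  have hall : ∀ S : Finset V, S ⊆ Y \ T →
      S.card ≤ ((X ∩ T).filter (fun x => ∃ s ∈ S, G.Adj s x)).card := by
    intro S hS
    by_contra hlt
    push_neg at hlt
    set N := (X ∩ T).filter (fun x => ∃ s ∈ S, G.Adj s x) with hN
    have hNT : N ⊆ T := fun x hx => (Finset.mem_inter.mp (Finset.mem_filter.mp hx).1).2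
    have hSY : ∀ a ∈ S, a ∈ Y := fun a ha => (Finset.mem_sdiff.mp (hS ha)).1
    have hST : Disjoint S T := by
      rw [Finset.disjoint_left]
      intro a ha
      exact (Finset.mem_sdiff.mp (hS ha)).2
    have key : ∀ a b, a ∈ T \ N → b ∈ S → H.Adj a b → False := by
      intro a b ha hb hab
      rw [hH] at hab
      have hbX := hYX b (hSY b hb)
      rcases hab.2 with ⟨haX, _⟩ | ⟨_, hbX'⟩
      · have : a ∈ N := by
          rw [hN, Finset.mem_filter, Finset.mem_inter]
          exact ⟨⟨haX, (Finset.mem_sdiff.mp ha).1⟩, b, hb, hab.1.symm⟩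
        exact (Finset.mem_sdiff.mp ha).2 this
      · exact hbX hbX'
    have hind : ∀ v ∈ (T \ N) ∪ S, ∀ w ∈ (T \ N) ∪ S, v ≠ w → ¬ H.Adj v w := by
      intro v hv w hw hvw hadj
      rw [Finset.mem_union] at hv hw
      rcases hv with hv | hv <;> rcases hw with hw | hw
      · exact hTind v (Finset.mem_sdiff.mp hv).1 w (Finset.mem_sdiff.mp hw).1 hvw hadj
      · exact key v w hv hw hadj
      · refine key w v hw hv ?_
        rw [hH] at hadj ⊢
        exact ⟨hadj.1.symm, hadj.2.symm.imp And.symm And.symm⟩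
      · rw [hH] at hadj
        rcases hadj.2 with ⟨hvX, _⟩ | ⟨_, hwX⟩
        · exact hYX v (hSY v hv) hvX
        · exact hYX w (hSY w hw) hwX
    have hle := hTmax _ hind
    have hdisj : Disjoint (T \ N) S := hST.symm.mono_left Finset.sdiff_subset
    have hcard : ((T \ N) ∪ S).card = (T \ N).card + S.card :=
      Finset.card_union_of_disjoint hdisj
    have h2 : (T \ N).card = T.card - N.card := Finset.card_sdiff_of_subset hNT
    have h3 : N.card ≤ T.card := Finset.card_le_card hNT
    omega
  refine ⟨hall, ?_⟩
  let t : {v // v ∈ Y \ T} → Finset V := fun v => (X ∩ T).filter (fun x => G.Adj v.1 x)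
  have hH2 : ∀ s : Finset {v // v ∈ Y \ T}, s.card ≤ (s.biUnion t).card := by
    intro s
    have h1 := hall (s.image Subtype.val)
      (by intro a ha; rcases Finset.mem_image.mp ha with ⟨b, hb, rfl⟩; exact b.2)
    rw [Finset.card_image_of_injective _ Subtype.val_injective] at h1
    refine h1.trans (Finset.card_le_card ?_)
    intro x hx
    rw [Finset.mem_filter] at hx
    rcases hx.2 with ⟨a, ha, hax⟩
    rcases Finset.mem_image.mp ha with ⟨b, hb, rfl⟩
    exact Finset.mem_biUnion.mpr ⟨b, hb, Finset.mem_filter.mpr ⟨hx.1, hax⟩⟩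
  obtain ⟨f, hf, hft⟩ := (Finset.all_card_le_biUnion_card_iff_exists_injective t).mp hH2
  refine ⟨fun v => if h : v ∈ Y \ T then f ⟨v, h⟩ else v, ?_, ?_⟩
  · intro a ha b hb hab
    simp only [Finset.mem_coe] at ha hb
    simp only [dif_pos ha, dif_pos hb] at hab
    exact congrArg Subtype.val (hf hab)
  · intro v hv
    simp only [dif_pos hv]
    have := hft ⟨v, hv⟩
    rw [Finset.mem_filter] at this
    exact ⟨this.1, this.2⟩
end

section
/- Let t,k ≥ 3 and let G be a (K_t, T_k)-co-critical graph with critical coloring τ. Then every connected component D of the blue graph G_b satisfies |D| ≤ k−1 and G[V(D)] is a complete graph on |D| vertices. -/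
/-- A red/blue edge-coloring of `G`, given by its red subgraph `R ≤ G`, is a
critical coloring if the red graph is `K_t`-free and every component of the
blue graph `G \ R` has fewer than `k` vertices. -/
def IsCriticalColoring {V : Type*} (G R : SimpleGraph V) (t k : ℕ) : Prop :=
  R ≤ G ∧ (∀ S : Finset V, ¬ R.IsNClique t S) ∧
    ∀ c : (G \ R).ConnectedComponent, c.supp.ncard < k

/-- `G` is `(K_t, 𝒯_k)`-co-critical. -/
def CoCritical {V : Type*} (G : SimpleGraph V) (t k : ℕ) : Prop :=
  G ≠ ⊤ ∧ (∃ R, IsCriticalColoring G R t k) ∧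
    ∀ u v : V, u ≠ v → ¬ G.Adj u v →
      ∀ R, ¬ IsCriticalColoring (G ⊔ SimpleGraph.fromEdgeSet {s(u, v)}) R t k

/-!
Adding a non-edge `uv` inside a blue component `D` and colouring it blue keeps the red graph
unchanged and does not merge blue components, so the colouring stays critical; co-criticality
forbids that, hence `G[V(D)]` is complete.
-/

namespace SimpleGraph

variable {V : Type*} {G H : SimpleGraph V}

lemma Reachable.of_adj_imp_reachable (h : ∀ a b, H.Adj a b → G.Reachable a b) {u v : V}
    (huv : H.Reachable u v) : G.Reachable u v := by
  obtain ⟨p⟩ := huv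
  induction p with
  | nil => rfl
  | cons hadj _ ih => exact (h _ _ hadj).trans ih

lemma reachable_eq_of_le_of_adj_imp_reachable (hGH : G ≤ H)
    (h : ∀ a b, H.Adj a b → G.Reachable a b) : H.Reachable = G.Reachable := by
  ext a b
  exact ⟨Reachable.of_adj_imp_reachable h, Reachable.mono hGH⟩

lemma ConnectedComponent.exists_supp_eq_of_reachable_eq (h : H.Reachable = G.Reachable)
    (c : H.ConnectedComponent) : ∃ c' : G.ConnectedComponent, c'.supp = c.supp := by
  induction c using ConnectedComponent.ind with
  | h w =>
    refine ⟨G.connectedComponentMk w, ?_⟩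
    ext x
    simp only [ConnectedComponent.mem_supp_iff, ConnectedComponent.eq, h]

lemma reachable_sdiff_sup_edge_eq {R : SimpleGraph V} {u v : V} (huv : (G \ R).Reachable u v) :
    ((G ⊔ edge u v) \ R).Reachable = (G \ R).Reachable := by
  refine reachable_eq_of_le_of_adj_imp_reachable (sdiff_le_sdiff_right le_sup_left) ?_
  rintro a b ⟨hG | huv', hR⟩
  · exact Adj.reachable ⟨hG, hR⟩
  · obtain ⟨⟨rfl, rfl⟩ | ⟨rfl, rfl⟩, -⟩ := (edge_adj u v a b).mp huv'
    exacts [huv, huv.symm]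

end SimpleGraph

open SimpleGraph

lemma IsCriticalColoring.sup_edge {V : Type*} {G R : SimpleGraph V} {t k : ℕ}
    (hR : IsCriticalColoring G R t k) {u v : V} (huv : (G \ R).Reachable u v) :
    IsCriticalColoring (G ⊔ edge u v) R t k := by
  refine ⟨hR.1.trans le_sup_left, hR.2.1, fun c ↦ ?_⟩
  obtain ⟨c', hc'⟩ := c.exists_supp_eq_of_reachable_eq (reachable_sdiff_sup_edge_eq huv)
  exact hc' ▸ hR.2.2 c'

theorem stmt_4_general {V : Type*} (t k : ℕ)
    (G : SimpleGraph V) (hG : CoCritical G t k)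
    (R : SimpleGraph V) (hR : IsCriticalColoring G R t k) :
    ∀ D : (G \ R).ConnectedComponent,
      D.supp.ncard ≤ k - 1 ∧
      ∀ u ∈ D.supp, ∀ v ∈ D.supp, u ≠ v → G.Adj u v := by
  intro D
  refine ⟨Nat.le_sub_one_of_lt (hR.2.2 D), fun u hu v hv huv ↦ ?_⟩
  by_contra hadj
  exact hG.2.2 u v huv hadj R (hR.sup_edge (D.reachable_of_mem_supp hu hv))

/-- every component `D` of the blue graph of a critical coloring of a
`(K_t, 𝒯_k)`-co-critical graph satisfies `|D| ≤ k-1`, and `G` induces a complete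
graph on `V(D)`. -/
theorem stmt_4 {V : Type*} [Fintype V] (t k : ℕ) (ht : 3 ≤ t) (hk : 3 ≤ k)
    (G : SimpleGraph V) (hG : CoCritical G t k)
    (R : SimpleGraph V) (hR : IsCriticalColoring G R t k) :
    ∀ D : (G \ R).ConnectedComponent,
      D.supp.ncard ≤ k - 1 ∧
      ∀ u ∈ D.supp, ∀ v ∈ D.supp, u ≠ v → G.Adj u v :=
  stmt_4_general t k G hG R hR
end

section
/- Let t,k ≥ 3, let G be a (K_t, 𝒯_k)-co-critical graph with critical coloring τ, and let D₁,…,D_q be those components of the blue graph G_b with |D_i| < k/2 for all i ∈ [q]. Then for all i ≠ j, every vertex of D_i is adjacent in the red graph G_r to every vertex of D_j; consequently q ≤ t−1. -/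
open SimpleGraph in
lemma reach_sup_edge {V : Type*} (B : SimpleGraph V) (u v : V) {w x : V}
    (h : (B ⊔ SimpleGraph.fromEdgeSet {s(u, v)}).Reachable w x) :
    B.Reachable w x ∨
      ((B.Reachable w u ∨ B.Reachable w v) ∧ (B.Reachable x u ∨ B.Reachable x v)) := by
  obtain ⟨p⟩ := h
  induction p with
  | nil => exact Or.inl (Reachable.refl _)
  | cons hab p ih =>
    rename_i a b c
    rcases hab with hB | hE
    · rcases ih with h1 | ⟨h2, h3⟩
      · exact Or.inl (hB.reachable.trans h1)
      · refine Or.inr ⟨?_, h3⟩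
        rcases h2 with h2 | h2
        exacts [Or.inl (hB.reachable.trans h2), Or.inr (hB.reachable.trans h2)]
    · rw [SimpleGraph.fromEdgeSet_adj, Set.mem_singleton_iff, Sym2.eq_iff] at hE
      have hb : B.Reachable b u ∨ B.Reachable b v := by
        rcases hE.1 with ⟨rfl, rfl⟩ | ⟨rfl, rfl⟩
        exacts [Or.inr (Reachable.refl _), Or.inl (Reachable.refl _)]
      have ha : B.Reachable a u ∨ B.Reachable a v := by
        rcases hE.1 with ⟨rfl, rfl⟩ | ⟨rfl, rfl⟩
        exacts [Or.inl (Reachable.refl _), Or.inr (Reachable.refl _)]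
      refine Or.inr ⟨ha, ?_⟩
      rcases ih with h1 | ⟨_, h3⟩
      · rcases hb with hb | hb
        exacts [Or.inl (h1.symm.trans hb), Or.inr (h1.symm.trans hb)]
      · exact h3

/-- the blue components of size less than k/2 of a critical coloring of a
`(K_t, 𝒯_k)`-co-critical graph are pairwise completely joined in red, and hence
there are at most `t - 1` of them. -/
theorem stmt_5 {V : Type*} [Fintype V] (t k : ℕ) (ht : 3 ≤ t) (hk : 3 ≤ k)
    (G : SimpleGraph V) (hG : CoCritical G t k)
    (R : SimpleGraph V) (hR : IsCriticalColoring G R t k) :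
    (∀ c d : (G \ R).ConnectedComponent,
        2 * c.supp.ncard < k → 2 * d.supp.ncard < k → c ≠ d →
        ∀ u ∈ c.supp, ∀ v ∈ d.supp, R.Adj u v) ∧
    {c : (G \ R).ConnectedComponent | 2 * c.supp.ncard < k}.ncard ≤ t - 1 := by
  classical
  have key : ∀ c d : (G \ R).ConnectedComponent,
      2 * c.supp.ncard < k → 2 * d.supp.ncard < k → c ≠ d →
      ∀ u ∈ c.supp, ∀ v ∈ d.supp, R.Adj u v := by
    intro c d hc hd hcd u hu v hv
    rw [SimpleGraph.ConnectedComponent.mem_supp_iff] at hu hv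
    by_contra hRuv
    have huv : u ≠ v := by rintro rfl; exact hcd (hu ▸ hv)
    have hGuv : ¬ G.Adj u v := by
      intro h
      exact hcd (hu ▸ hv ▸ SimpleGraph.ConnectedComponent.sound
        (SimpleGraph.Adj.reachable (by simp [SimpleGraph.sdiff_adj, h, hRuv])))
    refine hG.2.2 u v huv hGuv R ⟨hR.1.trans le_sup_left, hR.2.1, ?_⟩
    have hB' : (G ⊔ SimpleGraph.fromEdgeSet {s(u, v)}) \ R
        = (G \ R) ⊔ SimpleGraph.fromEdgeSet {s(u, v)} := by
      ext a b
      simp only [SimpleGraph.sdiff_adj, SimpleGraph.sup_adj, SimpleGraph.fromEdgeSet_adj,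
        Set.mem_singleton_iff, Sym2.eq_iff]
      constructor
      · rintro ⟨hGab | he, hr⟩
        exacts [Or.inl ⟨hGab, hr⟩, Or.inr he]
      · rintro (⟨hGab, hr⟩ | he)
        · exact ⟨Or.inl hGab, hr⟩
        · refine ⟨Or.inr he, ?_⟩
          rcases he.1 with ⟨rfl, rfl⟩ | ⟨rfl, rfl⟩
          exacts [hRuv, fun h => hRuv h.symm]
    rw [hB']
    intro c'
    induction c' using SimpleGraph.ConnectedComponent.ind with
    | _ w =>
    by_cases hw : (G \ R).Reachable w u ∨ (G \ R).Reachable w v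
    · have hsub : (((G \ R) ⊔ SimpleGraph.fromEdgeSet {s(u, v)}).connectedComponentMk w).supp
          ⊆ c.supp ∪ d.supp := by
        intro x hx
        rw [SimpleGraph.ConnectedComponent.mem_supp_iff, SimpleGraph.ConnectedComponent.eq] at hx
        have hx' : (G \ R).Reachable x u ∨ (G \ R).Reachable x v := by
          rcases reach_sup_edge _ u v hx with h1 | ⟨h2, _⟩
          · rcases hw with hw | hw
            exacts [Or.inl (h1.trans hw), Or.inr (h1.trans hw)]
          · exact h2
        rcases hx' with h | h
        · refine Or.inl ?_
          rw [SimpleGraph.ConnectedComponent.mem_supp_iff, ← hu]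
          exact SimpleGraph.ConnectedComponent.sound h
        · refine Or.inr ?_
          rw [SimpleGraph.ConnectedComponent.mem_supp_iff, ← hv]
          exact SimpleGraph.ConnectedComponent.sound h
      calc _ ≤ (c.supp ∪ d.supp).ncard := Set.ncard_le_ncard hsub (Set.toFinite _)
        _ ≤ c.supp.ncard + d.supp.ncard := Set.ncard_union_le _ _
        _ < k := by omega
    · have hsub : (((G \ R) ⊔ SimpleGraph.fromEdgeSet {s(u, v)}).connectedComponentMk w).supp
          ⊆ ((G \ R).connectedComponentMk w).supp := by
        intro x hx
        rw [SimpleGraph.ConnectedComponent.mem_supp_iff, SimpleGraph.ConnectedComponent.eq] at hx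
        rcases reach_sup_edge _ u v hx with h1 | ⟨_, h3⟩
        · rw [SimpleGraph.ConnectedComponent.mem_supp_iff]
          exact SimpleGraph.ConnectedComponent.sound h1
        · exact absurd h3 hw
      exact lt_of_le_of_lt (Set.ncard_le_ncard hsub (Set.toFinite _))
        (hR.2.2 ((G \ R).connectedComponentMk w))
  refine ⟨key, ?_⟩
  by_contra hcon
  push_neg at hcon
  have htS : t ≤ {c : (G \ R).ConnectedComponent | 2 * c.supp.ncard < k}.ncard := by omega
  obtain ⟨T, hTS, hT⟩ := Set.exists_subset_card_eq htS
  haveI : Finite ((G \ R).ConnectedComponent) := Quot.finite _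
  have hTfin : T.Finite := Set.toFinite T
  set f : (G \ R).ConnectedComponent → V := fun c => c.exists_rep.choose with hf
  have hfmem : ∀ c : (G \ R).ConnectedComponent, f c ∈ c.supp := by
    intro c
    rw [SimpleGraph.ConnectedComponent.mem_supp_iff]
    exact c.exists_rep.choose_spec
  have hfinj : Function.Injective f := by
    intro c d h
    have h1 := hfmem c
    have h2 := hfmem d
    rw [SimpleGraph.ConnectedComponent.mem_supp_iff] at h1 h2
    rw [← h1, ← h2, h]
  refine hR.2.1 (hTfin.toFinset.image f) ⟨?_, ?_⟩
  · intro a ha b hb hab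
    simp only [Finset.coe_image, Set.mem_image, Set.Finite.coe_toFinset] at ha hb
    obtain ⟨c, hcT, rfl⟩ := ha
    obtain ⟨d, hdT, rfl⟩ := hb
    have hcd : c ≠ d := fun h => hab (by rw [h])
    exact key c d (hTS hcT) (hTS hdT) hcd _ (hfmem c) _ (hfmem d)
  · rw [Finset.card_image_of_injective _ hfinj, ← Set.ncard_eq_toFinset_card T hTfin]
    exact hT
end

section
/- Let t,k ≥ 3, let G be a (K_t,𝒯_k)-co-critical graph with a critical coloring τ maximizing the number of red edges, let D₁,…,D_p be the components of the blue graph G_b, and let H be obtained from G by deleting all edges inside each V(D_i). Then for any u ∈ V(D_i) and v ∈ V(D_j) with i ≠ j and uv ∉ E(H), the graph H[N_H(u) ∩ N_H(v)] contains K_{t−2} as a subgraph. -/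
/-- The spanning subgraph of `G` obtained by deleting all edges lying inside a
single component of the blue graph `B`. -/
def Hgraph {V : Type*} (G B : SimpleGraph V) : SimpleGraph V where
  Adj u v := G.Adj u v ∧ B.connectedComponentMk u ≠ B.connectedComponentMk v
  symm := by
    constructor
    intro u v h
    exact ⟨h.1.symm, h.2.symm⟩
  loopless := by
    constructor
    intro u h
    exact h.2 rfl

open Finset

namespace SimpleGraph

variable {V : Type*}

lemma CliqueFree.exists_isNClique_subset_neighborSet_inter [DecidableEq V] {G : SimpleGraph V}
    {n : ℕ} {x y : V} {t : Finset V} (h : G.CliqueFree n) (hc : (G ⊔ edge x y).IsNClique n t)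
    (hne : x ≠ y) :
    ∃ s : Finset V, ↑s ⊆ G.neighborSet x ∩ G.neighborSet y ∧ G.IsNClique (n - 2) s := by
  have hc' : (G ⊔ edge y x).IsNClique n t := edge_comm x y ▸ hc
  have hx : x ∈ t := h.mem_of_sup_edge_isNClique hc
  have hy : y ∈ t := h.mem_of_sup_edge_isNClique hc'
  have hcx : G.IsNClique (n - 1) (t.erase x) := hc.erase_of_sup_edge_of_mem hx
  have hcy : G.IsNClique (n - 1) (t.erase y) := hc'.erase_of_sup_edge_of_mem hy
  refine ⟨(t.erase x).erase y, fun z hz => ?_, ?_⟩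
  · obtain ⟨⟨hzt, hzx⟩, hzy⟩ : (z ∈ t ∧ z ≠ x) ∧ z ≠ y := by simpa using hz
    exact ⟨hcy.1 (by simp [hx, hne]) (by simp [hzt, hzy]) hzx.symm,
      hcx.1 (by simp [hy, hne.symm]) (by simp [hzt, hzx]) hzy.symm⟩
  · simpa [Nat.sub_sub] using hcx.erase_of_mem (mem_erase_of_ne_of_mem hne.symm hy)

lemma reachable_eq_of_le_of_adj_reachable {B B' : SimpleGraph V} (hle : B ≤ B')
    (h : ∀ ⦃x y⦄, B'.Adj x y → B.Reachable x y) : B'.Reachable = B.Reachable := by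
  ext x y
  refine ⟨fun ⟨w⟩ => ?_, Reachable.mono hle⟩
  induction w with
  | nil => rfl
  | cons hadj w ih => exact (h hadj).trans (ih ⟨w⟩)

lemma ConnectedComponent.exists_supp_eq_of_reachable_eq_s7 {B B' : SimpleGraph V}
    (h : B'.Reachable = B.Reachable) (c : B'.ConnectedComponent) :
    ∃ c' : B.ConnectedComponent, c'.supp = c.supp := by
  induction c using ConnectedComponent.ind with
  | h x =>
    refine ⟨B.connectedComponentMk x, Set.ext fun y => ?_⟩
    simp only [ConnectedComponent.mem_supp_iff, ConnectedComponent.eq, h]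

end SimpleGraph

open SimpleGraph

section Recolouring

variable {V : Type*}

lemma Hgraph_le (G B : SimpleGraph V) : Hgraph G B ≤ G := fun _ _ h => h.1

lemma Hgraph_mono {G G' : SimpleGraph V} (B : SimpleGraph V) (h : G ≤ G') :
    Hgraph G B ≤ Hgraph G' B := fun _ _ hab => ⟨h hab.1, hab.2⟩

lemma reachable_sdiff_Hgraph_sup_edge {G R : SimpleGraph V} {u v : V} (hGuv : ¬ G.Adj u v) :
    ((G ⊔ edge u v) \ (Hgraph R (G \ R) ⊔ edge u v)).Reachable = (G \ R).Reachable := by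
  refine reachable_eq_of_le_of_adj_reachable ?_ ?_
  · rintro a b ⟨hGab, hRab⟩
    refine ⟨Or.inl hGab, ?_⟩
    rintro (hK | he)
    · exact hRab hK.1
    · rcases (edge_adj u v a b).mp he with ⟨⟨rfl, rfl⟩ | ⟨rfl, rfl⟩, -⟩
      exacts [hGuv hGab, hGuv hGab.symm]
  · rintro a b ⟨hGe, hK⟩
    simp only [sup_adj, not_or] at hGe hK
    obtain ⟨hKab, heab⟩ := hK
    by_cases hRab : R.Adj a b
    · exact ConnectedComponent.exact (by_contra fun hne => hKab ⟨hRab, hne⟩)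
    · exact Adj.reachable (G := G \ R) ⟨hGe.resolve_right heab, hRab⟩

lemma CoCritical.not_cliqueFree_Hgraph_sup_edge {G R : SimpleGraph V} {t k : ℕ} {u v : V}
    (hG : CoCritical G t k) (hR : IsCriticalColoring G R t k) (hne : u ≠ v)
    (hGuv : ¬ G.Adj u v) : ¬ (Hgraph R (G \ R) ⊔ edge u v).CliqueFree t := fun hfree =>
  hG.2.2 u v hne hGuv _ ⟨sup_le_sup_right ((Hgraph_le R _).trans hR.1) _, hfree, fun c => by
    obtain ⟨c', hc'⟩ :=
      ConnectedComponent.exists_supp_eq_of_reachable_eq_s7 (reachable_sdiff_Hgraph_sup_edge hGuv) c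
    exact hc' ▸ hR.2.2 c'⟩

end Recolouring

theorem stmt_7_general {V : Type*} (t k : ℕ)
    (G : SimpleGraph V) (hG : CoCritical G t k)
    (R : SimpleGraph V) (hR : IsCriticalColoring G R t k)
    (H : SimpleGraph V) (hH : H = Hgraph G (G \ R))
    (u v : V)
    (huv : (G \ R).connectedComponentMk u ≠ (G \ R).connectedComponentMk v)
    (hadj : ¬ H.Adj u v) :
    ∃ S : Finset V, ↑S ⊆ H.neighborSet u ∩ H.neighborSet v ∧
      H.IsNClique (t - 2) S := by
  classical
  subst hH
  have hne : u ≠ v := fun h => huv (congrArg _ h)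
  have hGuv : ¬ G.Adj u v := fun h => hadj ⟨h, huv⟩
  obtain ⟨T, hT⟩ := not_forall_not.mp (hG.not_cliqueFree_Hgraph_sup_edge hR hne hGuv)
  have hKH : Hgraph R (G \ R) ≤ Hgraph G (G \ R) := Hgraph_mono _ hR.1
  have hKfree : (Hgraph R (G \ R)).CliqueFree t := CliqueFree.anti (Hgraph_le R _) hR.2.1
  obtain ⟨S, hSnbr, hS⟩ := hKfree.exists_isNClique_subset_neighborSet_inter hT hne
  exact ⟨S, hSnbr.trans (Set.inter_subset_inter (neighborSet_mono hKH u) (neighborSet_mono hKH v)),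
    hS.mono hKH⟩

/-- with `R` a critical coloring of the co-critical graph `G`
maximizing the number of red edges, and `H` the graph obtained from `G` by
deleting all edges inside blue components, any two nonadjacent (in `H`) vertices
`u, v` lying in distinct blue components have a common neighborhood in `H`
containing a `K_{t-2}`. -/
theorem stmt_7 {V : Type*} [Fintype V] (t k : ℕ) (ht : 3 ≤ t) (hk : 3 ≤ k)
    (G : SimpleGraph V) (hG : CoCritical G t k)
    (R : SimpleGraph V) (hR : IsCriticalColoring G R t k)
    (hmax : ∀ R' : SimpleGraph V, IsCriticalColoring G R' t k →
      R'.edgeSet.ncard ≤ R.edgeSet.ncard)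
    (H : SimpleGraph V) (hH : H = Hgraph G (G \ R))
    (u v : V)
    (huv : (G \ R).connectedComponentMk u ≠ (G \ R).connectedComponentMk v)
    (hadj : ¬ H.Adj u v) :
    ∃ S : Finset V, ↑S ⊆ H.neighborSet u ∩ H.neighborSet v ∧
      H.IsNClique (t - 2) S :=
  stmt_7_general t k G hG R hR H hH u v huv hadj
end

section
/- Let t,k ≥ 3, G a (K_t,𝒯_k)-co-critical graph, τ a critical coloring of G maximizing red edges, D₁,…,D_p the blue components and H := G minus all edges inside the blue components. Then H is connected. -/
/-!
For non-adjacent `u, v`, recolor `uv` red and recolor blue every red edge at `u` or `v` lying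
inside a blue component. Blue components only shrink, so by co-criticality the new red graph
contains a `K_t`. It must use `uv`, and any third vertex `w` of it is joined to `u` and `v` by red
edges leaving their blue components: `u - w - v` is a path in `H`. Hence vertices in different
blue components are joined in `H`. There are at least two blue components, since otherwise adding
any missing edge of `G` would keep the coloring critical; this joins vertices of the same
component through a third one.
-/

open SimpleGraph

namespace SimpleGraph

variable {V : Type*}

theorem Reachable.of_forall_adj_reachable {B B' : SimpleGraph V}
    (h : ∀ ⦃a b⦄, B'.Adj a b → B.Reachable a b) {a b : V} (hab : B'.Reachable a b) :
    B.Reachable a b := by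
  rw [reachable_iff_reflTransGen] at hab ⊢
  exact Relation.reflTransGen_closed
    (fun x y hxy => (reachable_iff_reflTransGen x y).1 (h hxy)) a b hab

theorem ConnectedComponent.ncard_supp_lt_of_forall_adj_reachable [Finite V]
    {B B' : SimpleGraph V} {k : ℕ} (h : ∀ ⦃a b⦄, B'.Adj a b → B.Reachable a b)
    (hB : ∀ c : B.ConnectedComponent, c.supp.ncard < k) (c : B'.ConnectedComponent) :
    c.supp.ncard < k := by
  induction c using ConnectedComponent.ind with
  | h a =>
    have hsub : (B'.connectedComponentMk a).supp ⊆ (B.connectedComponentMk a).supp := by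
      intro x hx
      rw [ConnectedComponent.mem_supp_iff, ConnectedComponent.eq] at hx ⊢
      exact hx.of_forall_adj_reachable h
    exact (Set.ncard_le_ncard hsub (Set.toFinite _)).trans_lt (hB _)

end SimpleGraph

section

variable {V : Type*} {G R : SimpleGraph V} {t k : ℕ} {u v : V}

def starRecoloring (G R : SimpleGraph V) (u v : V) : SimpleGraph V :=
  (R ⊓ Hgraph G (G \ R)) ⊔ (R.deleteIncidenceSet u).deleteIncidenceSet v ⊔ edge u v

theorem starRecoloring_le_sup_edge (R : SimpleGraph V) (u v : V) :
    starRecoloring G R u v ≤ R ⊔ edge u v :=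
  sup_le_sup_right (sup_le inf_le_left
    ((deleteIncidenceSet_le _ _).trans (deleteIncidenceSet_le _ _))) _

theorem starRecoloring_le (hRG : R ≤ G) : starRecoloring G R u v ≤ G ⊔ edge u v :=
  (starRecoloring_le_sup_edge R u v).trans (sup_le_sup_right hRG _)

theorem Hgraph_adj_of_starRecoloring_adj {a w : V} (ha : a = u ∨ a = v)
    (hwu : w ≠ u) (hwv : w ≠ v) (h : (starRecoloring G R u v).Adj a w) :
    (Hgraph G (G \ R)).Adj a w := by
  simp only [starRecoloring, sup_adj, inf_adj, deleteIncidenceSet_adj, edge_adj] at h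
  rcases h with (⟨-, hH⟩ | ⟨⟨-, hau, -⟩, hav, -⟩) | ⟨⟨-, rfl⟩ | ⟨-, rfl⟩, -⟩ <;> tauto

theorem blue_reachable_of_adj_starRecoloring {a b : V}
    (h : ((G ⊔ edge u v) \ starRecoloring G R u v).Adj a b) : (G \ R).Reachable a b := by
  obtain ⟨hab | hab, hR'⟩ := h
  · by_cases hr : R.Adj a b
    · have hH : ¬(Hgraph G (G \ R)).Adj a b := fun hH => hR' (Or.inl (Or.inl ⟨hr, hH⟩))
      simpa [Hgraph, hab, ConnectedComponent.eq] using hH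
    · exact Adj.reachable ⟨hab, hr⟩
  · exact absurd (Or.inr hab) hR'

theorem Hgraph_reachable_of_isNClique_starRecoloring (ht : 3 ≤ t) (hRfree : R.CliqueFree t)
    {S : Finset V} (hS : (starRecoloring G R u v).IsNClique t S) :
    (Hgraph G (G \ R)).Reachable u v := by
  classical
  have hS' := hS.mono (starRecoloring_le_sup_edge R u v)
  have hu : u ∈ S := hRfree.mem_of_sup_edge_isNClique hS'
  have hv : v ∈ S := hRfree.mem_of_sup_edge_isNClique (edge_comm u v ▸ hS')
  obtain ⟨w, hwS, hw⟩ := Finset.exists_mem_notMem_of_card_lt_card (s := {u, v}) (t := S)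
    (Finset.card_le_two.trans_lt (hS.card_eq ▸ ht))
  simp only [Finset.mem_insert, Finset.mem_singleton, not_or] at hw
  obtain ⟨hwu, hwv⟩ := hw
  have huw := Hgraph_adj_of_starRecoloring_adj (Or.inl rfl) hwu hwv
    (hS.isClique hu hwS (Ne.symm hwu))
  have hvw := Hgraph_adj_of_starRecoloring_adj (Or.inr rfl) hwu hwv
    (hS.isClique hv hwS (Ne.symm hwv))
  exact huw.reachable.trans hvw.reachable.symm

namespace CoCritical

variable [Finite V]

theorem Hgraph_reachable_of_not_adj (ht : 3 ≤ t) (hG : CoCritical G t k)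
    (hR : IsCriticalColoring G R t k) (huv : u ≠ v) (hna : ¬G.Adj u v) :
    (Hgraph G (G \ R)).Reachable u v := by
  by_contra hn
  exact hG.2.2 u v huv hna (starRecoloring G R u v)
    ⟨starRecoloring_le hR.1,
      fun S hS => hn (Hgraph_reachable_of_isNClique_starRecoloring ht hR.2.1 hS),
      ConnectedComponent.ncard_supp_lt_of_forall_adj_reachable
        (fun _ _ h => blue_reachable_of_adj_starRecoloring h) hR.2.2⟩

theorem not_preconnected_sdiff (hG : CoCritical G t k) (hR : IsCriticalColoring G R t k) :
    ¬(G \ R).Preconnected := by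
  intro hconn
  obtain ⟨a, b, hab, hna⟩ := ne_top_iff_exists_not_adj.mp hG.1
  exact hG.2.2 a b hab hna R ⟨hR.1.trans le_sup_left, hR.2.1,
    ConnectedComponent.ncard_supp_lt_of_forall_adj_reachable (fun x y _ => hconn x y) hR.2.2⟩

theorem Hgraph_reachable_of_not_reachable (ht : 3 ≤ t) (hG : CoCritical G t k)
    (hR : IsCriticalColoring G R t k) {x y : V} (hxy : ¬(G \ R).Reachable x y) :
    (Hgraph G (G \ R)).Reachable x y := by
  by_cases hadj : G.Adj x y
  · exact Adj.reachable ⟨hadj, mt ConnectedComponent.eq.1 hxy⟩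
  · exact hG.Hgraph_reachable_of_not_adj ht hR (by rintro rfl; exact hxy .rfl) hadj

theorem Hgraph_connected (ht : 3 ≤ t) (hG : CoCritical G t k)
    (hR : IsCriticalColoring G R t k) : (Hgraph G (G \ R)).Connected := by
  have reach : ∀ {x y : V}, ¬(G \ R).Reachable x y → (Hgraph G (G \ R)).Reachable x y :=
    hG.Hgraph_reachable_of_not_reachable ht hR
  obtain ⟨p, q, hpq⟩ : ∃ p q, ¬(G \ R).Reachable p q := by
    simpa [Preconnected] using hG.not_preconnected_sdiff hR
  have : Nonempty V := ⟨p⟩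
  refine ⟨fun x y => ?_⟩
  by_cases hxy : (G \ R).Reachable x y
  · obtain ⟨z, hz⟩ : ∃ z, ¬(G \ R).Reachable x z := by
      by_contra! h
      exact hpq ((h p).symm.trans (h q))
    exact (reach hz).trans (reach fun hzy => hz (hxy.trans hzy.symm))
  · exact reach hxy

end CoCritical

end

theorem stmt_8_general {V : Type*} [Fintype V] (t k : ℕ) (ht : 3 ≤ t)
    (G : SimpleGraph V) (hG : CoCritical G t k)
    (R : SimpleGraph V) (hR : IsCriticalColoring G R t k)
    (H : SimpleGraph V) (hH : H = Hgraph G (G \ R)) :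
    H.Connected :=
  hH ▸ hG.Hgraph_connected ht hR

/-- with `R` a critical coloring of the co-critical graph `G`
maximizing the number of red edges, the graph `H` obtained from `G` by deleting
all edges inside blue components is connected. -/
theorem stmt_8 {V : Type*} [Fintype V] (t k : ℕ) (ht : 3 ≤ t) (hk : 3 ≤ k)
    (G : SimpleGraph V) (hG : CoCritical G t k)
    (R : SimpleGraph V) (hR : IsCriticalColoring G R t k)
    (hmax : ∀ R' : SimpleGraph V, IsCriticalColoring G R' t k →
      R'.edgeSet.ncard ≤ R.edgeSet.ncard)
    (H : SimpleGraph V) (hH : H = Hgraph G (G \ R)) :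
    H.Connected :=
  stmt_8_general t k ht G hG R hR H hH
end

section
/- Let H be a finite simple graph, q ∈ ℕ, R ⊆ V(H), and let R̄ be the closure of R under q-neighbor bootstrap percolation and Y = V(H)∖R̄. For v ∈ Y define the weight ω_R(v) = d_{R̄}(v) + d_Y(v)/2. Then e_H(R̄, Y) + e(H[Y]) = Σ_{v∈Y} ω_R(v). Consequently, if ω_R(v) ≥ q for all v ∈ Y, then e(H) ≥ q(|R̄| − |R|) + q|Y| = q·n − q|R|. -/
/-!
Both parts are double counting. Summing `d_{R̄}(v) + d_Y(v)/2` over `Y` counts every `R̄`–`Y`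
edge once and every edge of `H[Y]` twice, halved. For the bound, split `e(H)` into the edges
inside `R̄`, across, and inside `Y`: the last two total `Σ_{v∈Y} ω_R(v) ≥ q|Y|`, while building
`R̄` from `R` one vertex with at least `q` neighbours at a time gains at least `q` edges per
vertex, so `e(H[R̄]) ≥ q(|R̄| - |R|)`.
-/

open Finset

namespace SimpleGraph

variable {V : Type*} (H : SimpleGraph V)

lemma edgeSet_between (A B : Finset V) :
    (H.between A B).edgeSet = {e ∈ H.edgeSet | ∃ a ∈ A, ∃ b ∈ B, e = s(a, b)} := by
  ext e
  induction e using Sym2.ind with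
  | _ x y =>
    simp only [mem_edgeSet, between_adj, Set.mem_ofPred_eq, Sym2.eq_iff]
    aesop

/-- `H.between A A` is the induced subgraph `H[A]`, as a spanning subgraph of `H`. -/
lemma edgeSet_between_self (A : Finset V) :
    (H.between A A).edgeSet = {e ∈ H.edgeSet | ∀ v ∈ e, v ∈ A} := by
  ext e
  induction e using Sym2.ind with
  | _ x y => simp [between_adj]

lemma edges_between_comm (A B : Finset V) :
    {e ∈ H.edgeSet | ∃ a ∈ A, ∃ b ∈ B, e = s(a, b)} =
      {e ∈ H.edgeSet | ∃ a ∈ B, ∃ b ∈ A, e = s(a, b)} := by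
  rw [← edgeSet_between, ← edgeSet_between, between_comm]

variable [Fintype V] [DecidableRel H.Adj]

lemma ncard_edgeSet_eq_card_edgeFinset : H.edgeSet.ncard = #H.edgeFinset := by
  rw [← coe_edgeFinset, Set.ncard_coe_finset]

variable [DecidableEq V]

lemma degree_between_of_mem_right {A B : Finset V} {v : V} (hvB : v ∈ B) (hvA : v ∉ A) :
    (H.between A B).degree v = #{w ∈ A | H.Adj v w} := by
  rw [← card_neighborFinset_eq_degree, neighborFinset_eq_filter]
  congr 1
  ext w
  simp [between_adj, hvA, hvB, and_comm]

lemma degree_between_self {A : Finset V} {v : V} (hv : v ∈ A) :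
    (H.between A A).degree v = #{w ∈ A | H.Adj v w} := by
  rw [← card_neighborFinset_eq_degree, neighborFinset_eq_filter]
  congr 1
  ext w
  simp [between_adj, hv, and_comm]

lemma degree_between_self_of_notMem {A : Finset V} {v : V} (hv : v ∉ A) :
    (H.between A A).degree v = 0 := by
  rw [← card_neighborFinset_eq_degree, card_eq_zero, neighborFinset_eq_filter]
  ext w
  simp [between_adj, hv]

lemma ncard_edges_between {A B : Finset V} (h : Disjoint A B) :
    {e ∈ H.edgeSet | ∃ a ∈ A, ∃ b ∈ B, e = s(a, b)}.ncard = ∑ v ∈ B, #{w ∈ A | H.Adj v w} := by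
  rw [← edgeSet_between, ncard_edgeSet_eq_card_edgeFinset,
    ← isBipartiteWith_sum_degrees_eq_card_edges' (between_isBipartiteWith (disjoint_coe.2 h))]
  exact sum_congr rfl fun v hv => H.degree_between_of_mem_right hv (disjoint_right.1 h hv)

lemma two_mul_ncard_edges_inside (A : Finset V) :
    2 * {e ∈ H.edgeSet | ∀ v ∈ e, v ∈ A}.ncard = ∑ v ∈ A, #{w ∈ A | H.Adj v w} := by
  rw [← edgeSet_between_self, ncard_edgeSet_eq_card_edgeFinset, ← sum_degrees_eq_twice_card_edges,
    ← sum_subset (subset_univ A) fun v _ hv => H.degree_between_self_of_notMem hv]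
  exact sum_congr rfl fun v hv => H.degree_between_self hv

lemma card_filter_adj_add_card_filter_adj_compl (S : Finset V) (v : V) :
    #{w ∈ S | H.Adj v w} + #{w ∈ Sᶜ | H.Adj v w} = H.degree v := by
  rw [← card_union_of_disjoint (disjoint_filter_filter disjoint_compl_right), ← filter_union,
    union_compl, ← card_neighborFinset_eq_degree, neighborFinset_eq_filter]

lemma ncard_edgeSet_eq_add (S : Finset V) :
    H.edgeSet.ncard = {e ∈ H.edgeSet | ∀ v ∈ e, v ∈ S}.ncard
      + {e ∈ H.edgeSet | ∃ a ∈ S, ∃ b ∈ Sᶜ, e = s(a, b)}.ncard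
      + {e ∈ H.edgeSet | ∀ v ∈ e, v ∈ Sᶜ}.ncard := by
  have hS := H.two_mul_ncard_edges_inside S
  have hSc := H.two_mul_ncard_edges_inside Sᶜ
  have hcross := H.ncard_edges_between (disjoint_compl_right : Disjoint S Sᶜ)
  have hcross' := H.ncard_edges_between (disjoint_compl_left : Disjoint Sᶜ S)
  rw [edges_between_comm] at hcross'
  -- handshake over `S ∪ Sᶜ`; each crossing edge is counted once from either side
  have hdeg : 2 * H.edgeSet.ncard = ∑ v ∈ S, (#{w ∈ S | H.Adj v w} + #{w ∈ Sᶜ | H.Adj v w})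
      + ∑ v ∈ Sᶜ, (#{w ∈ S | H.Adj v w} + #{w ∈ Sᶜ | H.Adj v w}) := by
    simp only [card_filter_adj_add_card_filter_adj_compl, sum_add_sum_compl,
      sum_degrees_eq_twice_card_edges, ncard_edgeSet_eq_card_edgeFinset]
  rw [sum_add_distrib, sum_add_distrib] at hdeg
  omega

lemma ncard_edges_inside_insert {S : Finset V} {v : V} (hv : v ∉ S) :
    {e ∈ H.edgeSet | ∀ u ∈ e, u ∈ insert v S}.ncard
      = {e ∈ H.edgeSet | ∀ u ∈ e, u ∈ S}.ncard + #{w ∈ S | H.Adj v w} := by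
  have hfilter (u : V) :
      #{w ∈ insert v S | H.Adj u w} = #{w ∈ S | H.Adj u w} + if H.Adj u v then 1 else 0 := by
    rw [filter_insert]
    split_ifs <;> simp [card_insert_of_notMem, hv]
  apply Nat.eq_of_mul_eq_mul_left two_pos
  rw [mul_add, two_mul_ncard_edges_inside, two_mul_ncard_edges_inside, sum_insert hv]
  simp only [hfilter, H.irrefl, if_false, add_zero, sum_add_distrib, ← card_filter, H.adj_comm _ v]
  ring

def IsBootstrapClosed (q : ℕ) (A : Finset V) : Prop :=
  ∀ v, q ≤ #{w ∈ A | H.Adj v w} → v ∈ A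

lemma ncard_edges_inside_add_mul_le {q : ℕ} {R Rbar S : Finset V}
    (hclosed : H.IsBootstrapClosed q Rbar)
    (hmin : ∀ A, R ⊆ A → H.IsBootstrapClosed q A → Rbar ⊆ A) (hRS : R ⊆ S) (hS : S ⊆ Rbar) :
    {e ∈ H.edgeSet | ∀ v ∈ e, v ∈ S}.ncard + q * (#Rbar - #S)
      ≤ {e ∈ H.edgeSet | ∀ v ∈ e, v ∈ Rbar}.ncard := by
  refine Finset.strongDownwardInduction (n := #Rbar) (p := fun S => R ⊆ S → S ⊆ Rbar →
      {e ∈ H.edgeSet | ∀ v ∈ e, v ∈ S}.ncard + q * (#Rbar - #S)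
        ≤ {e ∈ H.edgeSet | ∀ v ∈ e, v ∈ Rbar}.ncard)
    (fun S ih _ hRS hS => ?_) S (card_le_card hS) hRS hS
  by_cases hSclosed : H.IsBootstrapClosed q S
  · obtain rfl : S = Rbar := hS.antisymm (hmin S hRS hSclosed)
    simp
  obtain ⟨v, hvq, hvS⟩ : ∃ v, q ≤ #{w ∈ S | H.Adj v w} ∧ v ∉ S := by
    simpa [IsBootstrapClosed] using hSclosed
  have hvRbar : v ∈ Rbar := hclosed v (hvq.trans (card_le_card (filter_subset_filter _ hS)))
  have hinsert : insert v S ⊆ Rbar := insert_subset hvRbar hS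
  have hstep := ih (card_le_card hinsert) (ssubset_insert hvS) (hRS.trans (subset_insert v S))
    hinsert
  have hcard := card_le_card hinsert
  rw [H.ncard_edges_inside_insert hvS, card_insert_of_notMem hvS] at hstep
  rw [card_insert_of_notMem hvS] at hcard
  rw [show #Rbar - #S = #Rbar - (#S + 1) + 1 by omega, mul_add_one]
  linarith

end SimpleGraph

/-- with `R̄` the `q`-neighbour bootstrap percolation closure of
`R` in `H` and `Y = V(H) ∖ R̄`, the weights `ω_R(v) = d_{R̄}(v) + d_Y(v)/2`
satisfy `e_H(R̄, Y) + e(H[Y]) = Σ_{v ∈ Y} ω_R(v)`; consequently, if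
`ω_R(v) ≥ q` for every `v ∈ Y`, then `e(H) ≥ q·n − q·|R|`. -/
theorem stmt_15 {V : Type*} [Fintype V] [DecidableEq V] (H : SimpleGraph V)
    [DecidableRel H.Adj] (q : ℕ) (R Rbar : Finset V)
    (hsub : R ⊆ Rbar)
    (hclosed : ∀ v : V, q ≤ (Rbar.filter (fun w => H.Adj v w)).card → v ∈ Rbar)
    (hmin : ∀ A : Finset V, R ⊆ A →
      (∀ v : V, q ≤ (A.filter (fun w => H.Adj v w)).card → v ∈ A) → Rbar ⊆ A)
    (Y : Finset V) (hY : Y = Rbarᶜ) :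
    (({e ∈ H.edgeSet | ∃ a ∈ Rbar, ∃ b ∈ Y, e = s(a, b)}.ncard : ℚ) +
        ({e ∈ H.edgeSet | ∀ v ∈ e, (v : V) ∈ Y}.ncard : ℚ) =
      ∑ v ∈ Y, (((Rbar.filter (fun w => H.Adj v w)).card : ℚ) +
        ((Y.filter (fun w => H.Adj v w)).card : ℚ) / 2)) ∧
    ((∀ v ∈ Y, (q : ℚ) ≤ ((Rbar.filter (fun w => H.Adj v w)).card : ℚ) +
        ((Y.filter (fun w => H.Adj v w)).card : ℚ) / 2) →
      (q : ℚ) * (Fintype.card V) - (q : ℚ) * R.card ≤ (H.edgeSet.ncard : ℚ)) := by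
  subst hY
  have hweights : ({e ∈ H.edgeSet | ∃ a ∈ Rbar, ∃ b ∈ Rbarᶜ, e = s(a, b)}.ncard : ℚ) +
      {e ∈ H.edgeSet | ∀ v ∈ e, v ∈ Rbarᶜ}.ncard =
      ∑ v ∈ Rbarᶜ, ((#{w ∈ Rbar | H.Adj v w} : ℚ) + #{w ∈ Rbarᶜ | H.Adj v w} / 2) := by
    have hinside := H.two_mul_ncard_edges_inside Rbarᶜ
    rw [H.ncard_edges_between disjoint_compl_right, sum_add_distrib, ← sum_div,
      ← Nat.cast_sum, ← Nat.cast_sum, ← hinside]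
    push_cast
    ring
  refine ⟨hweights, fun hω => ?_⟩
  have hclosure := H.ncard_edges_inside_add_mul_le hclosed hmin Subset.rfl hsub
  have hsum : ∑ _v ∈ Rbarᶜ, (q : ℚ) ≤ _ := sum_le_sum hω
  have hcard : (#Rbar : ℚ) + #Rbarᶜ = Fintype.card V := by exact_mod_cast card_add_card_compl Rbar
  rw [← hweights, sum_const, nsmul_eq_mul] at hsum
  qify [card_le_card hsub] at hclosure
  rw [H.ncard_edgeSet_eq_add Rbar, ← hcard]
  push_cast
  linarith
end

section
/- Fix t ∈ {4,5}, k ≥ 4, and n ≥ (2t−3)(k−1) + ⌈k/2⌉² − 1. The explicitly constructed graph G (built from a K_{k−1} block A, blocks B₁,…,B_{t−2} and C₁,…,C_{t−2} each ≅ K_{k−2}, a union H₂ of cliques of sizes ⌈k/2⌉ and ⌈k/2⌉+1, and 2t−4 apex-like vertices x₁,…,x_{t−2}, y₁,…,y_{t−2} joined as specified) admits a red/blue edge-coloring σ in which the red graph contains no K_t and every blue component has at most k−1 vertices. -/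
/-- Vertex set of the construction: a block `A` of size `k-1`, blocks
`B₁,…,B_{t-2}` and `C₁,…,C_{t-2}` of size `k-2`, the cliques of
`H₂ = (s-r)K_m ∪ rK_{m+1}` (with `m = ⌈k/2⌉`), and vertices
`x₁,…,x_{t-2}`, `y₁,…,y_{t-2}`. -/
abbrev CVert (t k s r m : ℕ) : Type :=
  Fin (k - 1) ⊕ (Fin (t - 2) × Fin (k - 2)) ⊕ (Fin (t - 2) × Fin (k - 2)) ⊕
    (Σ i : Fin s, Fin (if (i : ℕ) < s - r then m else m + 1)) ⊕
    Fin (t - 2) ⊕ Fin (t - 2)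

/-- One-directional description of the adjacency of the constructed graph `G`:
`A`, each `B_i`, each `C_i` and each clique of `H₂` are cliques; each `B_i` is
joined to `A ∪ C_i ∪ B_j` (`j ≠ i`); `x_i` is joined to all of `H₁ ∪ H₂` and to
all `x_j`; `y_i` is joined to `V(H) ∖ V(A)` and to all `x_j` with `j ≠ i`. -/
def baseAdj (t k s r m : ℕ) : CVert t k s r m → CVert t k s r m → Prop
  | Sum.inl _, Sum.inl _ => True
  | Sum.inr (Sum.inl _), Sum.inl _ => True
  | Sum.inr (Sum.inl _), Sum.inr (Sum.inl _) => True
  | Sum.inr (Sum.inl (i, _)), Sum.inr (Sum.inr (Sum.inl (j, _))) => i = j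
  | Sum.inr (Sum.inr (Sum.inl (i, _))), Sum.inr (Sum.inr (Sum.inl (j, _))) => i = j
  | Sum.inr (Sum.inr (Sum.inr (Sum.inl ⟨i, _⟩))),
      Sum.inr (Sum.inr (Sum.inr (Sum.inl ⟨j, _⟩))) => i = j
  | Sum.inr (Sum.inr (Sum.inr (Sum.inr (Sum.inl _)))), Sum.inl _ => True
  | Sum.inr (Sum.inr (Sum.inr (Sum.inr (Sum.inl _)))), Sum.inr (Sum.inl _) => True
  | Sum.inr (Sum.inr (Sum.inr (Sum.inr (Sum.inl _)))),
      Sum.inr (Sum.inr (Sum.inl _)) => True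
  | Sum.inr (Sum.inr (Sum.inr (Sum.inr (Sum.inl _)))),
      Sum.inr (Sum.inr (Sum.inr (Sum.inl _))) => True
  | Sum.inr (Sum.inr (Sum.inr (Sum.inr (Sum.inl _)))),
      Sum.inr (Sum.inr (Sum.inr (Sum.inr (Sum.inl _)))) => True
  | Sum.inr (Sum.inr (Sum.inr (Sum.inr (Sum.inl i)))),
      Sum.inr (Sum.inr (Sum.inr (Sum.inr (Sum.inr j)))) => i ≠ j
  | Sum.inr (Sum.inr (Sum.inr (Sum.inr (Sum.inr _)))), Sum.inr (Sum.inl _) => True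
  | Sum.inr (Sum.inr (Sum.inr (Sum.inr (Sum.inr _)))),
      Sum.inr (Sum.inr (Sum.inl _)) => True
  | Sum.inr (Sum.inr (Sum.inr (Sum.inr (Sum.inr _)))),
      Sum.inr (Sum.inr (Sum.inr (Sum.inl _))) => True
  | _, _ => False

/-- One-directional description of the blue edges of the coloring `σ`: all edges
inside `A`, each `B_i`, each `C_i` and each clique of `H₂`, the edges from `x_i`
to `B_i`, and the edges from `y_i` to `C_i`. -/
def blueAdj (t k s r m : ℕ) : CVert t k s r m → CVert t k s r m → Prop
  | Sum.inl _, Sum.inl _ => True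
  | Sum.inr (Sum.inl (i, _)), Sum.inr (Sum.inl (j, _)) => i = j
  | Sum.inr (Sum.inr (Sum.inl (i, _))), Sum.inr (Sum.inr (Sum.inl (j, _))) => i = j
  | Sum.inr (Sum.inr (Sum.inr (Sum.inl ⟨i, _⟩))),
      Sum.inr (Sum.inr (Sum.inr (Sum.inl ⟨j, _⟩))) => i = j
  | Sum.inr (Sum.inr (Sum.inr (Sum.inr (Sum.inl i)))), Sum.inr (Sum.inl (j, _)) => i = j
  | Sum.inr (Sum.inr (Sum.inr (Sum.inr (Sum.inr i)))),
      Sum.inr (Sum.inr (Sum.inl (j, _))) => i = j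
  | _, _ => False

namespace Stmt16aux

/-- signature for red cliques -/
def psi {t k s r m : ℕ} : CVert t k s r m → ℕ
  | Sum.inl _ => 0
  | Sum.inr (Sum.inl (i, _)) => (i : ℕ) + 2
  | Sum.inr (Sum.inr (Sum.inl _)) => 0
  | Sum.inr (Sum.inr (Sum.inr (Sum.inl _))) => 0
  | Sum.inr (Sum.inr (Sum.inr (Sum.inr (Sum.inl i)))) => (i : ℕ) + 2
  | Sum.inr (Sum.inr (Sum.inr (Sum.inr (Sum.inr _)))) => 1

/-- blue-component label -/
def cl {t k s r m : ℕ} : CVert t k s r m → ℕ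
  | Sum.inl _ => 0
  | Sum.inr (Sum.inl (i, _)) => 4 * (i : ℕ) + 1
  | Sum.inr (Sum.inr (Sum.inl (i, _))) => 4 * (i : ℕ) + 2
  | Sum.inr (Sum.inr (Sum.inr (Sum.inl ⟨j, _⟩))) => 4 * (j : ℕ) + 3
  | Sum.inr (Sum.inr (Sum.inr (Sum.inr (Sum.inl i)))) => 4 * (i : ℕ) + 1
  | Sum.inr (Sum.inr (Sum.inr (Sum.inr (Sum.inr i)))) => 4 * (i : ℕ) + 2

/-- position inside a blue component -/
def theta {t s r m : ℕ} (k : ℕ) : CVert t k s r m → ℕ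
  | Sum.inl a => (a : ℕ)
  | Sum.inr (Sum.inl (_, b)) => (b : ℕ)
  | Sum.inr (Sum.inr (Sum.inl (_, c))) => (c : ℕ)
  | Sum.inr (Sum.inr (Sum.inr (Sum.inl ⟨_, d⟩))) => (d : ℕ)
  | Sum.inr (Sum.inr (Sum.inr (Sum.inr (Sum.inl _)))) => k - 2
  | Sum.inr (Sum.inr (Sum.inr (Sum.inr (Sum.inr _)))) => k - 2

lemma blue_le_base {t k s r m : ℕ} (u v : CVert t k s r m)
    (h : blueAdj t k s r m u v) : baseAdj t k s r m u v := by
  rcases u with a | ⟨i, b⟩ | ⟨i, c⟩ | ⟨j, d⟩ | i | i <;>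
    rcases v with a' | ⟨i', b'⟩ | ⟨i', c'⟩ | ⟨j', d'⟩ | i' | i' <;>
    simp_all [baseAdj, blueAdj]

lemma cl_blue {t k s r m : ℕ} (u v : CVert t k s r m)
    (h : blueAdj t k s r m u v) : cl u = cl v := by
  rcases u with a | ⟨i, b⟩ | ⟨i, c⟩ | ⟨j, d⟩ | i | i <;>
    rcases v with a' | ⟨i', b'⟩ | ⟨i', c'⟩ | ⟨j', d'⟩ | i' | i' <;>
    simp_all [cl, blueAdj]

lemma theta_cl_inj {t k s r m : ℕ} (u v : CVert t k s r m)
    (hcl : cl u = cl v) (hth : theta k u = theta k v) : u = v := by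
  rcases u with a | ⟨i, b⟩ | ⟨i, c⟩ | ⟨j, d⟩ | i | i <;>
    rcases v with a' | ⟨i', b'⟩ | ⟨i', c'⟩ | ⟨j', d'⟩ | i' | i' <;>
    simp_all [cl, theta] <;>
    first
    | (exact Fin.ext (by omega))
    | (constructor <;> exact Fin.ext (by omega))
    | (exact absurd hth (by omega))
    | (obtain rfl : j = j' := Fin.ext (by omega); simp_all; exact Fin.ext (by omega))
    | omega

lemma psi_red {t k s r m : ℕ} (u v : CVert t k s r m)
    (hbase : baseAdj t k s r m u v ∨ baseAdj t k s r m v u)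
    (hblue : ¬ (blueAdj t k s r m u v ∨ blueAdj t k s r m v u))
    (hne : u ≠ v) : psi u ≠ psi v := by
  rcases u with a | ⟨i, b⟩ | ⟨i, c⟩ | ⟨j, d⟩ | i | i <;>
    rcases v with a' | ⟨i', b'⟩ | ⟨i', c'⟩ | ⟨j', d'⟩ | i' | i' <;>
    simp_all [psi, baseAdj, blueAdj] <;>
    omega

end Stmt16aux

/-- for `t ∈ {4,5}`, `k ≥ 4` and
`n ≥ (2t-3)(k-1) + ⌈k/2⌉² - 1`, the explicitly constructed graph `G` (with
`m = ⌈k/2⌉`, `s` and `r` the quotient and remainder of `n - (2t-3)(k-1)` by `m`)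
admits the red/blue edge-coloring `σ` (blue graph `Blue`, red graph `G \ Blue`)
in which the red graph contains no `K_t` and every blue component has at most
`k-1` vertices. -/



theorem stmt_16 (t k n s r m : ℕ) (ht : t = 4 ∨ t = 5) (hk : 4 ≤ k)
    (hm : m = (k + 1) / 2)
    (hn : (2 * t - 3) * (k - 1) + m * m - 1 ≤ n)
    (hs : s = (n - (2 * t - 3) * (k - 1)) / m)
    (hr : r = (n - (2 * t - 3) * (k - 1)) % m)
    (G Blue : SimpleGraph (CVert t k s r m))
    (hG : G = SimpleGraph.fromRel (baseAdj t k s r m))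
    (hBlue : Blue = SimpleGraph.fromRel (blueAdj t k s r m)) :
    Blue ≤ G ∧
    (∀ S : Finset (CVert t k s r m), ¬ (G \ Blue).IsNClique t S) ∧
    ∀ c : Blue.ConnectedComponent, c.supp.ncard ≤ k - 1 := by
  have ht4 : 4 ≤ t := by rcases ht with h | h <;> omega
  subst hG hBlue
  refine ⟨?_, ?_, ?_⟩
  · intro u v h
    rw [SimpleGraph.fromRel_adj] at h ⊢
    exact ⟨h.1, h.2.imp (Stmt16aux.blue_le_base u v) (Stmt16aux.blue_le_base v u)⟩
  · rintro S ⟨hclq, hcard⟩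
    have hR : ∀ u ∈ S, ∀ v ∈ S, u ≠ v →
        (baseAdj t k s r m u v ∨ baseAdj t k s r m v u) ∧
          ¬ (blueAdj t k s r m u v ∨ blueAdj t k s r m v u) := by
      intro u hu v hv huv
      have h := hclq (Finset.mem_coe.mpr hu) (Finset.mem_coe.mpr hv) huv
      rw [SimpleGraph.sdiff_adj, SimpleGraph.fromRel_adj, SimpleGraph.fromRel_adj] at h
      exact ⟨h.1.2, fun hb => h.2 ⟨huv, hb⟩⟩
    have hinj : Set.InjOn Stmt16aux.psi (S : Set (CVert t k s r m)) := by
      intro u hu v hv he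
      by_contra hne
      obtain ⟨hb, hnb⟩ := hR u (Finset.mem_coe.mp hu) v (Finset.mem_coe.mp hv) hne
      exact Stmt16aux.psi_red u v hb hnb hne he
    have hlt : ∀ u : CVert t k s r m, Stmt16aux.psi u < t := by
      intro u
      rcases u with a | ⟨i, b⟩ | ⟨i, c⟩ | ⟨j, d⟩ | i | i <;>
        simp only [Stmt16aux.psi] <;>
        first
        | omega
        | (have := i.2; omega)
    have himg : S.image Stmt16aux.psi = Finset.range t := by
      apply Finset.eq_of_subset_of_card_le
      · intro x hx
        obtain ⟨u, hu, rfl⟩ := Finset.mem_image.mp hx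
        exact Finset.mem_range.mpr (hlt u)
      · rw [Finset.card_range, Finset.card_image_of_injOn hinj, hcard]
    have hmem : ∀ i, i < t → ∃ u ∈ S, Stmt16aux.psi u = i := by
      intro i hi
      have : i ∈ S.image Stmt16aux.psi := himg ▸ Finset.mem_range.mpr hi
      simpa [Finset.mem_image] using this
    obtain ⟨w, hwS, hw0⟩ := hmem 0 (by omega)
    obtain ⟨y, hyS, hy1⟩ := hmem 1 (by omega)
    obtain ⟨q, rfl⟩ : ∃ q, y = Sum.inr (Sum.inr (Sum.inr (Sum.inr (Sum.inr q)))) := by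
      rcases y with a | ⟨i, b⟩ | ⟨i, c⟩ | ⟨j, d⟩ | i | i <;>
        simp only [Stmt16aux.psi] at hy1 <;>
        first
        | omega
        | exact ⟨_, rfl⟩
    obtain ⟨z, hzS, hzq⟩ := hmem ((q : ℕ) + 2) (by have := q.2; omega)
    have hwy : w ≠ Sum.inr (Sum.inr (Sum.inr (Sum.inr (Sum.inr q)))) := by
      intro h; rw [h] at hw0; rw [hw0] at hy1; omega
    have hzw : z ≠ w := by
      intro h; rw [h, hw0] at hzq; omega
    have hzy : z ≠ Sum.inr (Sum.inr (Sum.inr (Sum.inr (Sum.inr q)))) := by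
      intro h; rw [h, hy1] at hzq; omega
    obtain ⟨hbwy, hnwy⟩ := hR w hwS _ hyS hwy
    -- z is B_i or x_i with i = q, giving the key facts
    have hz : (∃ i : Fin (t - 2), ∃ b : Fin (k - 2),
          z = Sum.inr (Sum.inl (i, b)) ∧ (i : ℕ) = (q : ℕ)) ∨
        z = Sum.inr (Sum.inr (Sum.inr (Sum.inr (Sum.inl q)))) := by
      rcases z with a | ⟨i, b⟩ | ⟨i, c⟩ | ⟨j, d⟩ | i | i <;>
        simp only [Stmt16aux.psi] at hzq <;>
        first
        | omega
        | (exact Or.inl ⟨i, b, rfl, by omega⟩)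
        | (refine Or.inr ?_
           congr 5
           exact Fin.ext (by omega))
    -- rule out z = x_q (not red-adjacent to y_q)
    have hzx : ∀ hzz : z = Sum.inr (Sum.inr (Sum.inr (Sum.inr (Sum.inl q)))), False := by
      intro hzz
      obtain ⟨hb, -⟩ := hR z hzS _ hyS hzy
      rw [hzz] at hb
      simp [baseAdj] at hb
    rcases w with a | ⟨i, b⟩ | ⟨c₁, c₂⟩ | ⟨j, d⟩ | i | i
    · -- w ∈ A : not adjacent to y
      simp [baseAdj] at hbwy
    · simp [Stmt16aux.psi] at hw0
    · -- w ∈ C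
      have hqc : q ≠ c₁ := by
        intro h
        exact hnwy (Or.inr (by simp [blueAdj, h]))
      rcases hz with ⟨i, b, rfl, hiq⟩ | hzz
      · obtain ⟨hb, -⟩ := hR _ hzS _ hwS (by simp)
        simp [baseAdj] at hb
        exact hqc (Fin.ext (by rw [← hiq, hb]))
      · exact hzx hzz
    · -- w ∈ D (H₂)
      rcases hz with ⟨i, b, rfl, hiq⟩ | hzz
      · obtain ⟨hb, -⟩ := hR _ hzS _ hwS (by simp)
        simp [baseAdj] at hb
      · exact hzx hzz
    · simp [Stmt16aux.psi] at hw0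
    · simp [Stmt16aux.psi] at hw0
  · intro c
    induction c using SimpleGraph.ConnectedComponent.ind with
    | _ v₀ =>
    have hreach : ∀ u v : CVert t k s r m,
        (SimpleGraph.fromRel (blueAdj t k s r m)).Reachable u v →
          Stmt16aux.cl u = Stmt16aux.cl v := by
      intro u v h
      obtain ⟨p⟩ := h
      induction p with
      | nil => rfl
      | cons h p ih =>
        refine Eq.trans ?_ ih
        rw [SimpleGraph.fromRel_adj] at h
        rcases h.2 with h' | h'
        · exact Stmt16aux.cl_blue _ _ h'
        · exact (Stmt16aux.cl_blue _ _ h').symm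
    have hsupp : ∀ v ∈ ((SimpleGraph.fromRel (blueAdj t k s r m)).connectedComponentMk v₀).supp,
        Stmt16aux.cl v = Stmt16aux.cl v₀ := by
      intro v hv
      rw [SimpleGraph.ConnectedComponent.mem_supp_iff] at hv
      exact hreach v v₀ (SimpleGraph.ConnectedComponent.eq.mp hv)
    have hinj : Set.InjOn (Stmt16aux.theta k)
        ((SimpleGraph.fromRel (blueAdj t k s r m)).connectedComponentMk v₀).supp := by
      intro u hu v hv he
      exact Stmt16aux.theta_cl_inj u v ((hsupp u hu).trans (hsupp v hv).symm) he
    have hbound : ∀ v : CVert t k s r m, Stmt16aux.theta k v < k - 1 := by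
      intro v
      rcases v with a | ⟨i, b⟩ | ⟨i, c⟩ | ⟨j, d⟩ | i | i <;>
        simp only [Stmt16aux.theta] <;>
        first
        | (have := a.2; omega)
        | (have := b.2; omega)
        | (have := c.2; omega)
        | (have hd := d.2; split at hd <;> omega)
        | omega
    calc ((SimpleGraph.fromRel (blueAdj t k s r m)).connectedComponentMk v₀).supp.ncard
        = (Stmt16aux.theta k ''
            ((SimpleGraph.fromRel (blueAdj t k s r m)).connectedComponentMk v₀).supp).ncard :=
          (Set.ncard_image_of_injOn hinj).symm
      _ ≤ (Set.Iio (k - 1)).ncard := by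
          apply Set.ncard_le_ncard ?_ (Set.finite_Iio _)
          rintro x ⟨v, -, rfl⟩
          exact hbound v
      _ = k - 1 := by rw [Set.ncard_eq_toFinset_card', Set.toFinset_Iio, Nat.card_Iio]
end

section
/- Let t,k ≥ 3, let G be a (K_t,𝒯_k)-co-critical graph with critical coloring τ maximizing red edges, blue components D₁,…,D_p, and H := G minus all edges inside blue components. Suppose δ(H) ≤ 2t−5 and k ≥ t. Then for any vertex u of minimum degree in H, no edge of H[N_H(u)] is contained in every K_{t−2} subgraph of H[N_H(u)]. -/
/-!
Suppose every `K_{t-2}` of `H[N_H(u)]` contains the edge `vw`. If a red subgraph `R' ≤ H` leaves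
only small blue components, it is again a critical colouring of `G`; by co-criticality it cannot
be extended to `G + xz` for a non-edge `xz`, so `R' + xz` contains a `K_t` through `xz`, i.e. `R'`
has a `K_{t-2}` in the common neighbourhood of `x` and `z`. Such a clique can be moved into
`N_H(u)`: directly if `u` has a non-neighbour `z`, and otherwise by swapping at most one vertex,
since `N_H(u)` then misses only the blue component of `u`.

With `R' = H` this shows that the blue components `D(v)`, `D(w)` lie in `N_H(u)`; a clique
through `v` and `w` meets `D(v) ∪ D(w)` only in `v, w`, so
`|D(v) ∪ D(w)| ≤ δ + 2 - (t - 2) < t ≤ k`. Hence `R' = H - vw` is allowed as well, and yields a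
`K_{t-2}` in `N_H(u)` avoiding the edge `vw`.
-/

open SimpleGraph

section

variable {V : Type*}

namespace SimpleGraph

theorem Reachable.eq_of_forall_adj {β : Type*} {B : SimpleGraph V} {π : V → β}
    (hπ : ∀ a b, B.Adj a b → π a = π b) {a b : V} (h : B.Reachable a b) : π a = π b := by
  rw [reachable_iff_reflTransGen] at h
  induction h with
  | refl => rfl
  | tail _ hbc ih => exact ih.trans (hπ _ _ hbc)

theorem ConnectedComponent.ncard_supp_lt_of_fibers [Finite V] {β : Type*} {B : SimpleGraph V}
    {k : ℕ} (π : V → β) (hπ : ∀ a b, B.Adj a b → π a = π b)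
    (hfib : ∀ y, (π ⁻¹' {y}).ncard < k) (c : B.ConnectedComponent) : c.supp.ncard < k := by
  obtain ⟨x, rfl⟩ := c.exists_rep
  refine lt_of_le_of_lt (Set.ncard_le_ncard fun y hy => ?_) (hfib (π x))
  exact (ConnectedComponent.exact hy).eq_of_forall_adj hπ

theorem IsNClique.exists_commonNeighbors_of_sup_edge [DecidableEq V] {K : SimpleGraph V}
    {n : ℕ} {x z : V} {S : Finset V} (hfree : K.CliqueFree n) (hxz : x ≠ z)
    (hS : (K ⊔ edge x z).IsNClique n S) :
    ∃ T : Finset V, K.IsNClique (n - 2) T ∧ ↑T ⊆ K.commonNeighbors x z := by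
  have hx := hfree.mem_of_sup_edge_isNClique hS
  have hz := hfree.mem_of_sup_edge_isNClique (edge_comm .. ▸ hS)
  have hSx := hS.erase_of_sup_edge_of_mem hx
  have hSz := (edge_comm .. ▸ hS).erase_of_sup_edge_of_mem hz
  refine ⟨(S.erase x).erase z, ?_, fun a ha => ?_⟩
  · simpa [Nat.sub_sub] using hSx.erase_of_mem (Finset.mem_erase.2 ⟨hxz.symm, hz⟩)
  · obtain ⟨⟨haS, hax⟩, haz⟩ : (a ∈ S ∧ a ≠ x) ∧ a ≠ z := by simpa using ha
    exact ⟨hSz.1 (by simp [hxz, hx]) (by simp [haz, haS]) hax.symm,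
      hSx.1 (by simp [hxz.symm, hz]) (by simp [hax, haS]) haz.symm⟩

/-- The clique has at most one vertex `d` outside `A`; then `x ∈ A`, being adjacent to `d`, can
replace it. -/
theorem IsNClique.exists_subset_of_isIndepSet_compl {K : SimpleGraph V} {A : Set V} {n : ℕ}
    {x : V} {T : Finset V} (hind : K.IsIndepSet Aᶜ) (hT : K.IsNClique n T)
    (hTx : ↑T ⊆ K.neighborSet x) : ∃ P : Finset V, K.IsNClique n P ∧ ↑P ⊆ A := by
  classical
  by_cases hTA : ↑T ⊆ A
  · exact ⟨T, hT, hTA⟩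
  obtain ⟨d, hdT, hdA⟩ := Set.not_subset.1 hTA
  have hxd : K.Adj x d := hTx hdT
  have hxA : x ∈ A := by
    by_contra hxA
    exact hind hxA hdA hxd.ne hxd
  refine ⟨insert x (T.erase d), hT.insert_erase (fun a ha => hTx (by simp_all)) hdT, ?_⟩
  intro a ha
  obtain rfl | ⟨haT, had⟩ : a = x ∨ a ∈ T ∧ a ≠ d := by simpa using ha
  · exact hxA
  · by_contra haA
    exact hind haA hdA had (hT.1 haT hdT had)

end SimpleGraph

theorem Set.ncard_add_ncard_le_of_inter_subset_pair {α : Type*} [Finite α] {s t A : Set α}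
    {v w : α} (hs : s ⊆ A) (ht : t ⊆ A) (hst : s ∩ t ⊆ {v, w}) :
    s.ncard + t.ncard ≤ A.ncard + 2 := by
  rw [← Set.ncard_union_add_ncard_inter]
  refine add_le_add (Set.ncard_le_ncard (Set.union_subset hs ht)) ?_
  calc (s ∩ t).ncard ≤ ({v, w} : Set α).ncard := Set.ncard_le_ncard hst
    _ ≤ ({w} : Set α).ncard + 1 := Set.ncard_insert_le _ _
    _ = 2 := by rw [Set.ncard_singleton]

theorem hgraph_sdiff_le (G R : SimpleGraph V) : Hgraph G (G \ R) ≤ R := fun _ _ h => by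
  by_contra hR
  exact h.2 (ConnectedComponent.sound (Adj.reachable ⟨h.1, hR⟩))

theorem connectedComponentMk_eq_of_sdiff_hgraph_adj {G B : SimpleGraph V} {a b : V}
    (h : (G \ Hgraph G B).Adj a b) : B.connectedComponentMk a = B.connectedComponentMk b := by
  by_contra hne
  exact h.2 ⟨h.1, hne⟩

namespace IsCriticalColoring

variable {G R R' : SimpleGraph V} {t k : ℕ}

theorem mono (hR : IsCriticalColoring G R t k) (hle : R' ≤ R)
    (hblue : ∀ c : (G \ R').ConnectedComponent, c.supp.ncard < k) :
    IsCriticalColoring G R' t k :=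
  ⟨hle.trans hR.1, fun S hS => hR.2.1 S (hS.mono hle), hblue⟩

theorem hgraph [Finite V] (hR : IsCriticalColoring G R t k) :
    IsCriticalColoring G (Hgraph G (G \ R)) t k :=
  hR.mono (hgraph_sdiff_le G R) fun c => c.ncard_supp_lt_of_fibers _
    (fun _ _ => connectedComponentMk_eq_of_sdiff_hgraph_adj) hR.2.2

/-- Removing `vw` from `H` adds one blue edge, which can only merge the blue components of `v`
and `w`; the map `π` below identifies these two components. -/
theorem hgraph_sdiff_edge [Finite V] (hR : IsCriticalColoring G R t k) {v w : V}
    (hvw : (((G \ R).connectedComponentMk v).supp ∪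
      ((G \ R).connectedComponentMk w).supp).ncard < k) :
    IsCriticalColoring G (Hgraph G (G \ R) \ edge v w) t k := by
  classical
  set B := G \ R
  let π : V → B.ConnectedComponent := fun a =>
    if B.connectedComponentMk a = B.connectedComponentMk w then B.connectedComponentMk v
    else B.connectedComponentMk a
  refine hR.mono (sdiff_le.trans (hgraph_sdiff_le G R)) fun c =>
    c.ncard_supp_lt_of_fibers π (fun a b hab => ?_) fun y => ?_
  · by_cases hH : (Hgraph G B).Adj a b
    · have he : (edge v w).Adj a b := by
        by_contra he
        exact hab.2 ⟨hH, he⟩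
      obtain ⟨⟨rfl, rfl⟩ | ⟨rfl, rfl⟩, -⟩ := (edge_adj ..).1 he <;> simp [π]
    · simp only [π, connectedComponentMk_eq_of_sdiff_hgraph_adj (B := B) ⟨hab.1, hH⟩]
  · have hπ : ∀ a, π a = y → B.connectedComponentMk a ≠ B.connectedComponentMk w →
        B.connectedComponentMk a = y := fun a ha haw => by simpa only [π, if_neg haw] using ha
    by_cases hy : y = B.connectedComponentMk v
    · refine lt_of_le_of_lt (Set.ncard_le_ncard fun a ha => ?_) hvw
      by_cases haw : B.connectedComponentMk a = B.connectedComponentMk w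
      · exact Or.inr haw
      · exact Or.inl ((hπ a ha haw).trans hy)
    · refine lt_of_le_of_lt (Set.ncard_le_ncard fun a ha => hπ a ha fun haw => hy ?_) (hR.2.2 y)
      simpa only [π, if_pos haw] using ha.symm

end IsCriticalColoring

theorem CoCritical.exists_isNClique_commonNeighbors {G R : SimpleGraph V} {t k : ℕ}
    (hG : CoCritical G t k) (hR : IsCriticalColoring G R t k) {x z : V} (hxz : x ≠ z)
    (hnadj : ¬ G.Adj x z) :
    ∃ T : Finset V, R.IsNClique (t - 2) T ∧ ↑T ⊆ R.commonNeighbors x z := by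
  classical
  by_contra hT
  have hblue : (G ⊔ edge x z) \ (R ⊔ edge x z) = G \ R := by
    ext a b
    simp only [sdiff_adj, sup_adj]
    refine ⟨fun h => ⟨h.1.resolve_right fun he => h.2 (Or.inr he), fun hR => h.2 (Or.inl hR)⟩,
      fun h => ⟨Or.inl h.1, not_or.2 ⟨h.2, fun he => ?_⟩⟩⟩
    obtain ⟨⟨rfl, rfl⟩ | ⟨rfl, rfl⟩, -⟩ := (edge_adj ..).1 he
    exacts [hnadj h.1, hnadj h.1.symm]
  refine hG.2.2 x z hxz hnadj (R ⊔ edge x z) ⟨sup_le_sup_right hR.1 _,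
    fun S hS => hT (hS.exists_commonNeighbors_of_sup_edge hR.2.1 hxz), ?_⟩
  change ∀ c : ((G ⊔ edge x z) \ (R ⊔ edge x z)).ConnectedComponent, c.supp.ncard < k
  rw [hblue]
  exact hR.2.2

theorem exists_isNClique_subset_hgraph_neighborSet {G B H' : SimpleGraph V} {t k : ℕ}
    (hG : CoCritical G t k) (hH' : IsCriticalColoring G H' t k) (hle : H' ≤ Hgraph G B)
    (u : V) : ∃ P : Finset V, H'.IsNClique (t - 2) P ∧ ↑P ⊆ (Hgraph G B).neighborSet u := by
  by_cases hu : ∃ z, u ≠ z ∧ ¬ G.Adj u z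
  · obtain ⟨z, huz, hnadj⟩ := hu
    obtain ⟨T, hT, hTu⟩ := hG.exists_isNClique_commonNeighbors hH' huz hnadj
    exact ⟨T, hT, fun a ha => hle (hTu ha).1⟩
  push Not at hu
  obtain ⟨x, z, hxz, hnadj⟩ := ne_top_iff_exists_not_adj.1 hG.1
  obtain ⟨T, hT, hTx⟩ := hG.exists_isNClique_commonNeighbors hH' hxz hnadj
  have hcompl : ∀ y, y ∉ (Hgraph G B).neighborSet u →
      B.connectedComponentMk y = B.connectedComponentMk u := fun y hy => by
    by_contra hne
    have huy : u ≠ y := fun h => hne (congrArg _ h.symm)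
    exact hy ⟨hu y huy, fun h => hne h.symm⟩
  refine hT.exists_subset_of_isIndepSet_compl (fun a ha b hb _ hab => ?_) fun a ha => (hTx ha).1
  exact (hle hab).2 ((hcompl a ha).trans (hcompl b hb).symm)

theorem supp_subset_hgraph_neighborSet [Finite V] {G R : SimpleGraph V} {t k : ℕ}
    (hG : CoCritical G t k) (hR : IsCriticalColoring G R t k) {u x : V}
    (hux : (Hgraph G (G \ R)).Adj u x)
    (hx : ∀ S : Finset V, ↑S ⊆ (Hgraph G (G \ R)).neighborSet u →
      (Hgraph G (G \ R)).IsNClique (t - 2) S → x ∈ S) :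
    ((G \ R).connectedComponentMk x).supp ⊆ (Hgraph G (G \ R)).neighborSet u := by
  intro y hy
  have hne : (G \ R).connectedComponentMk u ≠ (G \ R).connectedComponentMk y :=
    fun h => hux.2 (h.trans hy)
  by_cases huy : G.Adj u y
  · exact ⟨huy, hne⟩
  obtain ⟨T, hT, hTuy⟩ :=
    hG.exists_isNClique_commonNeighbors hR.hgraph (fun h => hne (congrArg _ h)) huy
  exact absurd hy (hTuy (hx T (fun a ha => (hTuy ha).1) hT)).2.2

end

theorem stmt_18_general {V : Type*} [Fintype V] (t k : ℕ)
    (G : SimpleGraph V) (hG : CoCritical G t k)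
    (R : SimpleGraph V) (hR : IsCriticalColoring G R t k)
    (H : SimpleGraph V) (hH : H = Hgraph G (G \ R))
    (δ : ℕ) (hδsmall : δ ≤ 2 * t - 5) (hkt : t ≤ k)
    (u : V) (humin : (H.neighborSet u).ncard = δ) :
    ∀ v w : V, H.Adj u v → H.Adj u w → H.Adj v w →
      ∃ S : Finset V, ↑S ⊆ H.neighborSet u ∧ H.IsNClique (t - 2) S ∧
        ¬ (v ∈ S ∧ w ∈ S) := by
  subst hH
  intro v w huv huw hvw
  by_contra! hcon
  set s := ((G \ R).connectedComponentMk v).supp ∪ ((G \ R).connectedComponentMk w).supp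
  have hsub : s ⊆ _ := Set.union_subset
    (supp_subset_hgraph_neighborSet hG hR huv fun S hS hQ => (hcon S hS hQ).1)
    (supp_subset_hgraph_neighborSet hG hR huw fun S hS hQ => (hcon S hS hQ).2)
  obtain ⟨Q, hQ, hQu⟩ := exists_isNClique_subset_hgraph_neighborSet hG hR.hgraph le_rfl u
  obtain ⟨hvQ, hwQ⟩ := hcon Q hQu hQ
  have hsQ : s ∩ ↑Q ⊆ {v, w} := by
    rintro q ⟨hq | hq, hqQ⟩ <;> by_contra hqvw <;>
      simp only [Set.mem_insert_iff, Set.mem_singleton_iff, not_or] at hqvw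
    exacts [(hQ.1 hqQ hvQ hqvw.1).2 hq, (hQ.1 hqQ hwQ hqvw.2).2 hq]
  have hcount := Set.ncard_add_ncard_le_of_inter_subset_pair hsub hQu hsQ
  have hQ2 : 1 < Q.card := Finset.one_lt_card.2 ⟨v, hvQ, w, hwQ, hvw.ne⟩
  rw [Set.ncard_coe_finset, humin] at hcount
  rw [hQ.2] at hcount hQ2
  have hs : s.ncard < k := by omega
  obtain ⟨P, hP, hPu⟩ := exists_isNClique_subset_hgraph_neighborSet hG
    (hR.hgraph_sdiff_edge hs) sdiff_le u
  obtain ⟨hvP, hwP⟩ := hcon P hPu (hP.mono sdiff_le)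
  exact (hP.1 hvP hwP hvw.ne).2 ((edge_adj ..).2 ⟨Or.inl ⟨rfl, rfl⟩, hvw.ne⟩)

/-- with `R` a critical coloring of the co-critical graph `G`
maximizing red edges and `H` obtained by deleting all edges inside blue
components, if `δ(H) ≤ 2t - 5` and `k ≥ t`, then for every vertex `u` of minimum
degree in `H`, no edge of `H[N_H(u)]` lies in every `K_{t-2}` subgraph of
`H[N_H(u)]`. -/
theorem stmt_18 {V : Type*} [Fintype V] (t k : ℕ) (ht : 3 ≤ t) (hk : 3 ≤ k)
    (G : SimpleGraph V) (hG : CoCritical G t k)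
    (R : SimpleGraph V) (hR : IsCriticalColoring G R t k)
    (hmax : ∀ R' : SimpleGraph V, IsCriticalColoring G R' t k →
      R'.edgeSet.ncard ≤ R.edgeSet.ncard)
    (H : SimpleGraph V) (hH : H = Hgraph G (G \ R))
    (δ : ℕ) (hδlb : ∀ v : V, δ ≤ (H.neighborSet v).ncard)
    (hδmem : ∃ v : V, (H.neighborSet v).ncard = δ)
    (hδsmall : δ ≤ 2 * t - 5) (hkt : t ≤ k)
    (u : V) (humin : (H.neighborSet u).ncard = δ) :
    ∀ v w : V, H.Adj u v → H.Adj u w → H.Adj v w →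
      ∃ S : Finset V, ↑S ⊆ H.neighborSet u ∧ H.IsNClique (t - 2) S ∧
        ¬ (v ∈ S ∧ w ∈ S) :=
  stmt_18_general t k G hG R hR H hH δ hδsmall hkt u humin
end

section
/- Let G be a finite simple graph, let H be its complement, and let N be a set of vertices; suppose the graph H[N] is K_{t−1}-free, has clique number exactly t−2, and |N| ≤ 2t−5 (so the clique number exceeds |N|/2). If the intersection of all (t−2)-cliques of H[N] is a single vertex u₁, then |N| = 2t−5 and u₁ is adjacent (in H[N]) to every other vertex of N. -/
lemma hajnal_aux {W : Type*} [DecidableEq W] (Γ : SimpleGraph W) (k : ℕ)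
    (hfree : ∀ S : Finset W, ¬ Γ.IsNClique (k + 1) S) :
    ∀ (𝓕 : Finset (Finset W)) (h𝓕 : 𝓕.Nonempty),
      (∀ S ∈ 𝓕, Γ.IsNClique k S) →
      k + k ≤ (𝓕.inf' h𝓕 id).card + (𝓕.sup id).card := by
  intro 𝓕 h𝓕
  induction h𝓕 using Finset.Nonempty.cons_induction with
  | singleton a =>
      intro hcl
      have := (hcl a (by simp)).card_eq
      simp [this]
  | cons C 𝓕' hC h𝓕' ih =>
      intro hcl
      have ihh := ih (fun S hS => hcl S (Finset.mem_cons_of_mem hS))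
      set A := 𝓕'.inf' h𝓕' id with hA
      set B := 𝓕'.sup id with hB
      have hCcl : Γ.IsNClique k C := hcl C (Finset.mem_cons_self _ _)
      have h𝓕'' := h𝓕'
      obtain ⟨S₀, hS₀⟩ := h𝓕''
      have hAS₀ : A ⊆ S₀ := Finset.inf'_le id hS₀
      have hA_cl : Γ.IsClique (A : Set W) :=
        ((hcl S₀ (Finset.mem_cons_of_mem hS₀)).1).subset (by exact_mod_cast hAS₀)
      set D := (C ∩ B) ∪ (A \ C) with hD
      have hD_cl : Γ.IsClique (D : Set W) := by
        intro x hx y hy hxy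
        simp only [hD, Finset.coe_union, Set.mem_union, Finset.mem_coe,
          Finset.mem_inter, Finset.mem_sdiff] at hx hy
        rcases hx with ⟨hxC, hxB⟩ | ⟨hxA, hxC⟩ <;>
          rcases hy with ⟨hyC, hyB⟩ | ⟨hyA, hyC⟩
        · exact hCcl.1 (by exact_mod_cast hxC) (by exact_mod_cast hyC) hxy
        · obtain ⟨K, hK, hxK⟩ := Finset.mem_sup.mp hxB
          have hAK : A ⊆ K := Finset.inf'_le id hK
          exact (hcl K (Finset.mem_cons_of_mem hK)).1
            (by exact_mod_cast hxK) (by exact_mod_cast hAK hyA) hxy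
        · obtain ⟨K, hK, hyK⟩ := Finset.mem_sup.mp hyB
          have hAK : A ⊆ K := Finset.inf'_le id hK
          exact ((hcl K (Finset.mem_cons_of_mem hK)).1
            (by exact_mod_cast hyK) (by exact_mod_cast hAK hxA) hxy.symm).symm
        · exact hA_cl (by exact_mod_cast hxA) (by exact_mod_cast hyA) hxy
      have hD_card : D.card ≤ k := by
        by_contra h
        push_neg at h
        obtain ⟨E, hE, hEcard⟩ := Finset.exists_subset_card_eq (s := D) (n := k + 1) h
        exact hfree E ⟨hD_cl.subset (by exact_mod_cast hE), hEcard⟩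
      have hdisj : Disjoint (C ∩ B) (A \ C) := by
        rw [Finset.disjoint_left]
        intro x hx hx'
        exact (Finset.mem_sdiff.mp hx').2 (Finset.mem_inter.mp hx).1
      have e4 : D.card = (C ∩ B).card + (A \ C).card := Finset.card_union_of_disjoint hdisj
      have e1 : (A ∩ C).card + (A \ C).card = A.card := Finset.card_inter_add_card_sdiff A C
      have e2 : (C ∩ B).card + (C \ B).card = C.card := Finset.card_inter_add_card_sdiff C B
      have e3 : (C \ B).card + B.card = (C ∪ B).card := Finset.card_sdiff_add_card C B
      have hCk : C.card = k := hCcl.2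
      rw [Finset.inf'_cons h𝓕', Finset.sup_cons, ← hA, ← hB]
      simp only [id_eq, Finset.inf_eq_inter, Finset.sup_eq_union]
      have hcomm : (C ∩ A).card = (A ∩ C).card := by rw [Finset.inter_comm]
      omega

/-- let `Γ` be a finite graph on a vertex set `N` with at most
`2t-5` vertices, with no `K_{t-1}` and clique number exactly `t-2`. If the
intersection of (the vertex sets of) all `K_{t-2}` subgraphs of `Γ` is the
single vertex `u₁`, then `|N| = 2t-5` and `u₁` is adjacent to every other
vertex. -/
theorem stmt_19 {W : Type*} [Fintype W] (t : ℕ) (Γ : SimpleGraph W)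
    (hsmall : Fintype.card W ≤ 2 * t - 5)
    (hfree : ∀ S : Finset W, ¬ Γ.IsNClique (t - 1) S)
    (hclique : ∃ S : Finset W, Γ.IsNClique (t - 2) S)
    (u₁ : W)
    (hint : (⋂ S ∈ {S : Finset W | Γ.IsNClique (t - 2) S}, (S : Set W)) = {u₁}) :
    Fintype.card W = 2 * t - 5 ∧ ∀ v : W, v ≠ u₁ → Γ.Adj u₁ v := by
  classical
  have hu : u₁ ∈ ⋂ S ∈ {S : Finset W | Γ.IsNClique (t - 2) S}, (S : Set W) := by
    rw [hint]; exact Set.mem_singleton _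
  have ht : 3 ≤ t := by
    by_contra h
    push_neg at h
    have h0 : t - 2 = 0 := by omega
    have hcl0 : Γ.IsNClique (t - 2) (∅ : Finset W) := by
      rw [h0]; exact ⟨by simp [SimpleGraph.isClique_iff], by simp⟩
    have := Set.mem_iInter₂.mp hu ∅ hcl0
    simp at this
  have hfree' : ∀ S : Finset W, ¬ Γ.IsNClique ((t - 2) + 1) S := by
    intro S
    have : (t - 2) + 1 = t - 1 := by omega
    rw [this]; exact hfree S
  set 𝓕 : Finset (Finset W) := Finset.univ.filter (fun S => Γ.IsNClique (t - 2) S) with h𝓕def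
  have hmem𝓕 : ∀ S : Finset W, S ∈ 𝓕 ↔ Γ.IsNClique (t - 2) S := by
    intro S; simp [h𝓕def]
  obtain ⟨S₁, hS₁⟩ := hclique
  have h𝓕 : 𝓕.Nonempty := ⟨S₁, (hmem𝓕 S₁).mpr hS₁⟩
  set I := 𝓕.inf' h𝓕 id with hIdef
  set U := 𝓕.sup id with hUdef
  have hmemI : ∀ x : W, x ∈ I ↔ ∀ S : Finset W, Γ.IsNClique (t - 2) S → x ∈ S := by
    intro x
    constructor
    · intro hx S hS
      exact Finset.inf'_le id ((hmem𝓕 S).mpr hS) hx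
    · intro hx
      have : ({x} : Finset W) ⊆ I :=
        Finset.le_inf' h𝓕 id (fun S hS => Finset.singleton_subset_iff.mpr (hx S ((hmem𝓕 S).mp hS)))
      exact this (Finset.mem_singleton_self x)
  have hIset : (I : Set W) = {u₁} := by
    rw [← hint]
    ext x
    simp only [Finset.mem_coe, hmemI, Set.mem_iInter, Set.mem_setOf_eq, Finset.mem_coe]
  have hIeq : I = {u₁} := Finset.coe_injective (by rw [hIset, Finset.coe_singleton])
  have hhaj := hajnal_aux Γ (t - 2) hfree' 𝓕 h𝓕 (fun S hS => (hmem𝓕 S).mp hS)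
  rw [← hIdef, ← hUdef, hIeq, Finset.card_singleton] at hhaj
  have hUle : U.card ≤ Fintype.card W := Finset.card_le_univ U
  have hcard : Fintype.card W = 2 * t - 5 := by omega
  have hUcard : U.card = Fintype.card W := by omega
  have hUuniv : U = Finset.univ := Finset.eq_univ_of_card U hUcard
  refine ⟨hcard, ?_⟩
  intro v hv
  have hvU : v ∈ U := hUuniv ▸ Finset.mem_univ v
  obtain ⟨S, hS𝓕, hvS⟩ := Finset.mem_sup.mp hvU
  have hu₁S : u₁ ∈ S := by
    have : u₁ ∈ I := hIeq ▸ Finset.mem_singleton_self u₁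
    exact (hmemI u₁).mp this S ((hmem𝓕 S).mp hS𝓕)
  exact ((hmem𝓕 S).mp hS𝓕).1 (by exact_mod_cast hu₁S) (by exact_mod_cast hvS) (Ne.symm hv)
end
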